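/- (Well-definedness of the derived colouring.) Let σ be a winning strategy of the Petri game G_CP associated with an ω bipartite colouring problem CP. If s and s' are system places of σ above places s_a and s_b of N_CP respectively, with equal round counts r^T(s) = r^T(s') and r^B(s) = r^B(s'), and the strategy allows the colour transitions t_{a,c} at s and t_{b,c'} at s', then c = c'. Hence f(x, y) := the unique colour allowed at any system place s of σ with r^B(s) = x and r^T(s) = y is a well-defined partial function. -/

import Mathlib

namespace PG

/-- A (pre-)Petri net: places `P`, transitions `T`, flow maps and an initial marking.
Markings are sets of places (the nets considered are safe). -/
structure PreNet (P T : Type) : Type where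
  pre : T → Set P
  post : T → Set P
  init : Set P

namespace PreNet

variable {P T : Type}

/-- A transition is enabled at a marking if its preset is contained in it. -/
def enabled (N : PreNet P T) (M : Set P) (t : T) : Prop := N.pre t ⊆ M

/-- Firing a transition. -/
def fire (N : PreNet P T) (M : Set P) (t : T) : Set P := (M \ N.pre t) ∪ N.post t

/-- `Fires N M l M'` : firing the sequence `l` of (successively enabled) transitions
from `M` yields `M'`. -/
inductive Fires (N : PreNet P T) : Set P → List T → Set P → Prop
  | nil (M : Set P) : Fires N M [] M
  | cons {M M' : Set P} {t : T} {l : List T} :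
      N.enabled M t → Fires N (N.fire M t) l M' → Fires N M (t :: l) M'

/-- Reachable markings. -/
def reachable (N : PreNet P T) (M : Set P) : Prop := ∃ l : List T, N.Fires N.init l M

/-- Safety: firing never puts a token on an already occupied place, so markings
may be taken as sets of places. -/
def Safe (N : PreNet P T) : Prop :=
  ∀ M, N.reachable M → ∀ t, N.enabled M t → (M \ N.pre t) ∩ N.post t = ∅

/-- The flow relation on nodes. -/
def flow (N : PreNet P T) : P ⊕ T → P ⊕ T → Prop
  | Sum.inl p, Sum.inr t => p ∈ N.pre t
  | Sum.inr t, Sum.inl p => p ∈ N.post t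
  | _, _ => False

/-- Causal order: `x ≤ y` iff `x F⁺ y` or `x = y`. -/
def le (N : PreNet P T) : P ⊕ T → P ⊕ T → Prop := Relation.ReflTransGen N.flow

/-- Strict causal order `x F⁺ y`. -/
def lt (N : PreNet P T) : P ⊕ T → P ⊕ T → Prop := Relation.TransGen N.flow

/-- Conflict of two nodes. -/
def conflict (N : PreNet P T) (x y : P ⊕ T) : Prop :=
  ∃ t₁ t₂ : T, t₁ ≠ t₂ ∧ (N.pre t₁ ∩ N.pre t₂).Nonempty ∧
    N.le (Sum.inr t₁) x ∧ N.le (Sum.inr t₂) y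

/-- Concurrency of two nodes: neither causally related nor in conflict. -/
def concurrent (N : PreNet P T) (x y : P ⊕ T) : Prop :=
  ¬ N.le x y ∧ ¬ N.le y x ∧ ¬ N.conflict x y

end PreNet

/-- Well-formedness of a Petri net: presets nonempty and finite, postsets finite. -/
structure IsPetriNet {P T : Type} (N : PreNet P T) : Prop where
  pre_nonempty : ∀ t, (N.pre t).Nonempty
  pre_finite : ∀ t, (N.pre t).Finite
  post_finite : ∀ t, (N.post t).Finite

/-- Occurrence net. -/
structure IsOccurrenceNet {P T : Type} (N : PreNet P T) : Prop where
  toIsPetriNet : IsPetriNet N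
  acyclic : ∀ x, ¬ N.lt x x
  finitely_preceded : ∀ x, {y | N.le y x}.Finite
  place_pre_subsingleton : ∀ p : P, {t : T | p ∈ N.post t}.Subsingleton
  no_self_conflict : ∀ t : T, ¬ N.conflict (Sum.inr t) (Sum.inr t)
  init_eq : N.init = {p | ∀ t, p ∉ N.post t}

/-- Net homomorphism: preserves presets, postsets and the initial marking bijectively. -/
structure IsNetHom {P₁ T₁ P₂ T₂ : Type} (N₁ : PreNet P₁ T₁) (N₂ : PreNet P₂ T₂)
    (fp : P₁ → P₂) (ft : T₁ → T₂) : Prop where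
  pre_bij : ∀ t, Set.BijOn fp (N₁.pre t) (N₂.pre (ft t))
  post_bij : ∀ t, Set.BijOn fp (N₁.post t) (N₂.post (ft t))
  init_bij : Set.BijOn fp N₁.init N₂.init

/-- `(N, (fp, ft))` is a branching process of `N₀`. -/
structure IsBranchingProcess {P₀ T₀ P T : Type} (N₀ : PreNet P₀ T₀)
    (N : PreNet P T) (fp : P → P₀) (ft : T → T₀) : Prop where
  occ : IsOccurrenceNet N
  hom : IsNetHom N N₀ fp ft
  unique : ∀ t₁ t₂ : T, N.pre t₁ = N.pre t₂ → ft t₁ = ft t₂ → t₁ = t₂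

/-- The subprocess relation `B₁ ≤ B₂` between branching processes of the same net:
existence of an injective homomorphism commuting with the projections. -/
def BPle {P₀ T₀ P₁ T₁ P₂ T₂ : Type} (N₁ : PreNet P₁ T₁) (fp₁ : P₁ → P₀) (ft₁ : T₁ → T₀)
    (N₂ : PreNet P₂ T₂) (fp₂ : P₂ → P₀) (ft₂ : T₂ → T₀) : Prop :=
  ∃ (gp : P₁ → P₂) (gt : T₁ → T₂),
    IsNetHom N₁ N₂ gp gt ∧ fp₂ ∘ gp = fp₁ ∧ ft₂ ∘ gt = ft₁ ∧
    Function.Injective gp ∧ Function.Injective gt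

/-- Isomorphism `B₁ ≅ B₂` of branching processes: a bijective homomorphism
commuting with the projections. -/
def BPEquiv {P₀ T₀ P₁ T₁ P₂ T₂ : Type} (N₁ : PreNet P₁ T₁) (fp₁ : P₁ → P₀) (ft₁ : T₁ → T₀)
    (N₂ : PreNet P₂ T₂) (fp₂ : P₂ → P₀) (ft₂ : T₂ → T₀) : Prop :=
  ∃ (gp : P₁ → P₂) (gt : T₁ → T₂),
    IsNetHom N₁ N₂ gp gt ∧ fp₂ ∘ gp = fp₁ ∧ ft₂ ∘ gt = ft₁ ∧
    Function.Bijective gp ∧ Function.Bijective gt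

section Future

variable {P T : Type}

/-- Nodes of the future of a cut `C`: every place of `C` is a causal predecessor
of, or concurrent to, the node. -/
def futNode (N : PreNet P T) (C : Set P) (x : P ⊕ T) : Prop :=
  ∀ p ∈ C, N.le (Sum.inl p) x ∨ N.concurrent (Sum.inl p) x

abbrev FutP (N : PreNet P T) (C : Set P) : Type := {p : P // futNode N C (Sum.inl p)}
abbrev FutT (N : PreNet P T) (C : Set P) : Type := {t : T // futNode N C (Sum.inr t)}

/-- The future `Fut(B, C)` of a cut `C`: nodes as above, flow maps restricted,
initial marking `C`. -/
def futNet (N : PreNet P T) (C : Set P) : PreNet (FutP N C) (FutT N C) where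
  pre t := {p | p.1 ∈ N.pre t.1}
  post t := {p | p.1 ∈ N.post t.1}
  init := {p | p.1 ∈ C}

end Future

section Lkc

variable {P T P₀ T₀ : Type}

/-- The last known cut `lkc(t)` of a transition. -/
def lkc (N : PreNet P T) (t : T) : Set P :=
  {p | ¬ N.lt (Sum.inl p) (Sum.inr t) ∧
    ∀ t' : T, p ∈ N.post t' → N.le (Sum.inr t') (Sum.inr t)}

/-- The last known marking `lkm(t) = π(lkc(t))`. -/
def lkm (N : PreNet P T) (fp : P → P₀) (t : T) : Set P₀ := fp '' lkc N t

/-- Partial repetition cuts `prc(t₁, t₂)`. -/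
def prc (N : PreNet P T) (fp : P → P₀) (t₁ t₂ : T) : Prop :=
  lkm N fp t₁ = lkm N fp t₂ ∧ lkc N t₁ \ N.post t₁ = lkc N t₂ \ N.post t₂

/-- A loop of partial repetition cuts: `prc(t₁, t₂)` with `t₁ < t₂`. -/
def prcLoop (N : PreNet P T) (fp : P → P₀) (t₁ t₂ : T) : Prop :=
  prc N fp t₁ t₂ ∧ N.lt (Sum.inr t₁) (Sum.inr t₂)

end Lkc

section Glue

variable {P T P₀ T₀ : Type}

/-- Places of the cut-and-glued process `B - Fut(B,C₂) + Fut(B,C₁)'`: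
left places are those of `B` outside `Fut(B,C₂)` (keeping `C₂`), right places
are the fresh copies of the places of `Fut(B,C₁)` other than its initial marking. -/
def gluedPProp (N : PreNet P T) (C₁ C₂ : Set P) : P ⊕ P → Prop
  | Sum.inl p => ¬ futNode N C₂ (Sum.inl p) ∨ p ∈ C₂
  | Sum.inr p => futNode N C₁ (Sum.inl p) ∧ p ∉ C₁

/-- Transitions of the cut-and-glued process. -/
def gluedTProp (N : PreNet P T) (C₁ C₂ : Set P) : T ⊕ T → Prop
  | Sum.inl t => ¬ futNode N C₂ (Sum.inr t)
  | Sum.inr t => futNode N C₁ (Sum.inr t)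

abbrev GluedP (N : PreNet P T) (C₁ C₂ : Set P) : Type := {x : P ⊕ P // gluedPProp N C₁ C₂ x}
abbrev GluedT (N : PreNet P T) (C₁ C₂ : Set P) : Type := {x : T ⊕ T // gluedTProp N C₁ C₂ x}

/-- The cut-and-glued object `B_{C₁ → C₂} = B - Fut(B, C₂) + Fut(B, C₁)'`,
where the copy of `Fut(B, C₁)` is glued along `C₂` via the identification
`e : C₂ → C₁`. -/
def gluedNet (N : PreNet P T) (C₁ C₂ : Set P) (e : P → P) :
    PreNet (GluedP N C₁ C₂) (GluedT N C₁ C₂) where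
  pre t :=
    match t.1 with
    | Sum.inl t' => {x | ∃ q ∈ N.pre t', x.1 = Sum.inl q}
    | Sum.inr t' => {x | ∃ q ∈ N.pre t',
        (q ∉ C₁ ∧ x.1 = Sum.inr q) ∨ (q ∈ C₁ ∧ ∃ p ∈ C₂, e p = q ∧ x.1 = Sum.inl p)}
  post t :=
    match t.1 with
    | Sum.inl t' => {x | ∃ q ∈ N.post t', x.1 = Sum.inl q}
    | Sum.inr t' => {x | ∃ q ∈ N.post t',
        (q ∉ C₁ ∧ x.1 = Sum.inr q) ∨ (q ∈ C₁ ∧ ∃ p ∈ C₂, e p = q ∧ x.1 = Sum.inl p)}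
  init := {x | ∃ q ∈ N.init, x.1 = Sum.inl q}

/-- Projection of the glued process to the original underlying net (places). -/
def gluedFp {N : PreNet P T} {C₁ C₂ : Set P} (fp : P → P₀) (x : GluedP N C₁ C₂) : P₀ :=
  Sum.elim fp fp x.1

/-- Projection of the glued process to the original underlying net (transitions). -/
def gluedFt {N : PreNet P T} {C₁ C₂ : Set P} (ft : T → T₀) (x : GluedT N C₁ C₂) : T₀ :=
  Sum.elim ft ft x.1

end Glue

section Game

/-- A Petri game: an underlying net whose places are partitioned into system
places (`system`) and environment places (the rest), plus a set of bad markings. -/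
structure PetriGame (P₀ T₀ : Type) : Type where
  net : PreNet P₀ T₀
  system : Set P₀
  bad : Set (Set P₀)

variable {P₀ T₀ P T : Type}

/-- Winning strategy of a Petri game: a branching process of the underlying net
satisfying justified refusal, (global) safety, determinism and deadlock avoidance. -/
structure IsWinningStrategy (G : PetriGame P₀ T₀) (N : PreNet P T)
    (fp : P → P₀) (ft : T → T₀) : Prop where
  isBP : IsBranchingProcess G.net N fp ft
  justified_refusal : ∀ C : Set P,
    C.Pairwise (fun x y => N.concurrent (Sum.inl x) (Sum.inl y)) →
    ∀ t₀ : T₀, fp '' C = G.net.pre t₀ →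
    (¬ ∃ t : T, ft t = t₀ ∧ N.pre t = C) →
    ∃ p ∈ C, fp p ∈ G.system ∧ t₀ ∉ ft '' {t : T | p ∈ N.pre t}
  safety : ∀ M, N.reachable M → fp '' M ∉ G.bad
  determinism : ∀ p : P, fp p ∈ G.system → ∀ M, N.reachable M → p ∈ M →
    {t : T | p ∈ N.pre t ∧ N.enabled M t}.Subsingleton
  deadlock_avoiding : ∀ M, N.reachable M →
    (∃ t₀ : T₀, G.net.enabled (fp '' M) t₀) → ∃ t : T, N.enabled M t

/-- The synthesis problem: existence of a winning strategy. -/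
def HasWinningStrategy (G : PetriGame P₀ T₀) : Prop :=
  ∃ (P T : Type) (N : PreNet P T) (fp : P → P₀) (ft : T → T₀),
    IsWinningStrategy G N fp ft

/-- `K`-player Petri game: every reachable marking has at most `K` tokens. -/
def PetriGame.IsKPlayer (G : PetriGame P₀ T₀) (K : ℕ) : Prop :=
  ∀ M, G.net.reachable M → M.Finite ∧ M.ncard ≤ K

end Game

section Seg

variable {P₀ T₀ P T : Type}

/-- A maximally repeated strategy: partial repetition cuts have isomorphic futures. -/
def MaximallyRepeated (N : PreNet P T) (fp : P → P₀) (ft : T → T₀) : Prop :=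
  ∀ t₁ t₂ : T, prc N fp t₁ t₂ →
    BPEquiv (futNet N (lkc N t₁)) (fun p => fp p.1) (fun s => ft s.1)
            (futNet N (lkc N t₂)) (fun p => fp p.1) (fun s => ft s.1)

/-- Conditions (1) and (2) of a synchronisation segment of `t`:
`S ≤ Fut(B, lkc(t))` and every transition of the future not belonging to `S`
either has all places of its preset causal successors of `t`, or is a partial
repetition of a transition inside a loop of `S`. -/
def SegCond (N₀ : PreNet P₀ T₀) (N : PreNet P T) (fp : P → P₀) (ft : T → T₀) (t : T)
    {Ps Ts : Type} (S : PreNet Ps Ts) (fps : Ps → P₀) (fts : Ts → T₀) : Prop :=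
  IsBranchingProcess { N₀ with init := lkm N fp t } S fps fts ∧
  ∃ (gp : Ps → FutP N (lkc N t)) (gt : Ts → FutT N (lkc N t)),
    IsNetHom S (futNet N (lkc N t)) gp gt ∧
    (∀ p, fp (gp p).1 = fps p) ∧ (∀ s, ft (gt s).1 = fts s) ∧
    Function.Injective gp ∧ Function.Injective gt ∧
    ∀ t' : FutT N (lkc N t), t' ∉ Set.range gt →
      (∀ q ∈ N.pre t'.1, N.le (Sum.inr t) (Sum.inl q)) ∨
      (∃ s₁ s₂ s₃ : Ts, prcLoop N fp (gt s₁).1 (gt s₂).1 ∧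
        N.le (Sum.inr (gt s₃).1) (Sum.inr (gt s₂).1) ∧ prc N fp t'.1 (gt s₃).1)

/-- `S` is a synchronisation segment `Seg(t)`: a smallest branching process
(w.r.t. the subprocess relation) satisfying the segment conditions. -/
def IsSyncSegment (N₀ : PreNet P₀ T₀) (N : PreNet P T) (fp : P → P₀) (ft : T → T₀) (t : T)
    {Ps Ts : Type} (S : PreNet Ps Ts) (fps : Ps → P₀) (fts : Ts → T₀) : Prop :=
  SegCond N₀ N fp ft t S fps fts ∧
  ∀ (Ps' Ts' : Type) (S' : PreNet Ps' Ts') (fps' : Ps' → P₀) (fts' : Ts' → T₀),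
    SegCond N₀ N fp ft t S' fps' fts' → BPle S fps fts S' fps' fts'

end Seg

end PG

namespace PG

/-- Places of the net `N_CP` of the ω bipartite colouring problem: `env X a j` is
the place `e^X_{aj}` of environment player `a` of part `X` (`true` = top part,
`false` = bottom part) with index `j`; `chk a j k` is the environment place
recording the indices of the check transition `t_{aj−ak}`; `sys a` is the system
place `s_a`; `col c a` is the place `(c, a)` reached after choosing colour `c`. -/
inductive CPPlace (Col : Type) : Type
  | env : Bool → Fin 3 → Fin 6 → CPPlace Col
  | chk : Fin 3 → Fin 6 → Fin 6 → CPPlace Col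
  | sys : Fin 3 → CPPlace Col
  | col : Col → Fin 3 → CPPlace Col

/-- Transitions of `N_CP`: `round X r k` is the `k`-th transition of the round of
part `X` starting at index `roundStart r`, synchronising two of the three players
of the part; `check a j k` is the check transition `t_{aj−ak}`; `colour a c` is
the transition `t_{ac}` choosing colour `c` on the system place `s_a`. -/
inductive CPTrans (Col : Type) : Type
  | round : Bool → Fin 3 → Fin 3 → CPTrans Col
  | check : Fin 3 → Fin 6 → Fin 6 → CPTrans Col
  | colour : Fin 3 → Col → CPTrans Col

/-- Start index of the three rounds: the initial round starts at index 0, then the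
players alternate between a round starting at index 2 and one starting at 4. -/
def roundStart : Fin 3 → Fin 6 := ![0, 2, 4]

/-- Successor of a place index: `0 → 1 → 2 → 3 → 4 → 5 → 2`, so that after the
third round the players return to the places they were in before the second. -/
def nxt : Fin 6 → Fin 6 := ![1, 2, 3, 4, 5, 2]

/-- The net `N_CP`: a top part and a bottom part, each with three environment
players moving in rounds of three pairwise-synchronising transitions; check
transitions `t_{aj−ak}` take one player from each part and produce the recording
place and the system place `s_a`, from which a colour is chosen. -/
def cpNet (Col : Type) : PreNet (CPPlace Col) (CPTrans Col) where
  pre t :=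
    match t with
    | CPTrans.round X r k =>
      ![({CPPlace.env X 0 (roundStart r), CPPlace.env X 1 (roundStart r)} :
          Set (CPPlace Col)),
        {CPPlace.env X 1 (nxt (roundStart r)), CPPlace.env X 2 (roundStart r)},
        {CPPlace.env X 2 (nxt (roundStart r)), CPPlace.env X 0 (nxt (roundStart r))}] k
    | CPTrans.check a j k => {CPPlace.env true a j, CPPlace.env false a k}
    | CPTrans.colour a _ => {CPPlace.sys a}
  post t :=
    match t with
    | CPTrans.round X r k =>
      ![({CPPlace.env X 0 (nxt (roundStart r)), CPPlace.env X 1 (nxt (roundStart r))} :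
          Set (CPPlace Col)),
        {CPPlace.env X 1 (nxt (nxt (roundStart r))), CPPlace.env X 2 (nxt (roundStart r))},
        {CPPlace.env X 2 (nxt (nxt (roundStart r))),
          CPPlace.env X 0 (nxt (nxt (roundStart r)))}] k
    | CPTrans.check a j k => {CPPlace.chk a j k, CPPlace.sys a}
    | CPTrans.colour a c => {CPPlace.col c a}
  init := {p | ∃ (X : Bool) (a : Fin 3), p = CPPlace.env X a 0}

/-- Two players of the same part on places with indices `j` and `k` are in the
same round iff `j, k ∈ {0,1,2}` or `j, k ∈ {3,4}` or `j, k ∈ {5,2}`. -/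
def sameRound (j k : Fin 6) : Prop :=
  (j.1 ≤ 2 ∧ k.1 ≤ 2) ∨ ((j.1 = 3 ∨ j.1 = 4) ∧ (k.1 = 3 ∨ k.1 = 4)) ∨
  ((j.1 = 5 ∨ j.1 = 2) ∧ (k.1 = 5 ∨ k.1 = 2))

/-- A player with index `j` is one round ahead of a player with index `k` iff
`(j, k) ∈ {(3, 2), (5, 4)}`. -/
def aheadOne (j k : Fin 6) : Prop := (j.1 = 3 ∧ k.1 = 2) ∨ (j.1 = 5 ∧ k.1 = 4)

/-- The bad markings `B_Same ∪ B_DP ∪ B_VP ∪ B_HP ∪ B_init` of the Petri game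
`G_CP` of the ω-BCP with initial colours `Ci` and forbidden diagonal, horizontal
and vertical patterns `DP`, `HP`, `VP`. -/
def cpBad (Col : Type) (Ci : Set Col) (DP HP VP : Set (Col × Col)) :
    Set (Set (CPPlace Col)) :=
  {M | ∃ (a b : Fin 3) (j j' k k' : Fin 6) (cu cv : Col),
      CPPlace.chk a j j' ∈ M ∧ CPPlace.chk b k k' ∈ M ∧
      CPPlace.col cu a ∈ M ∧ CPPlace.col cv b ∈ M ∧
      ((sameRound j k ∧ sameRound j' k' ∧ cu ≠ cv) ∨
       (aheadOne j k ∧ aheadOne j' k' ∧ (cv, cu) ∈ DP) ∨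
       (aheadOne j k ∧ sameRound j' k' ∧ (cv, cu) ∈ VP) ∨
       (sameRound j k ∧ aheadOne j' k' ∧ (cv, cu) ∈ HP))} ∪
  {M | ∃ (a : Fin 3) (j j' : Fin 6) (cu : Col),
      CPPlace.chk a j j' ∈ M ∧ CPPlace.col cu a ∈ M ∧
      j.1 ≤ 1 ∧ j'.1 ≤ 1 ∧ cu ∉ Ci}

/-- The 6-player Petri game `G_CP` of an ω bipartite colouring problem: the six
environment players are on `env` places; the system places are the `s_a`. -/
def cpGame (Col : Type) (Ci : Set Col) (DP HP VP : Set (Col × Col)) :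
    PetriGame (CPPlace Col) (CPTrans Col) where
  net := cpNet Col
  system := {p | ∃ a : Fin 3, p = CPPlace.sys a}
  bad := cpBad Col Ci DP HP VP

/-- Number of rounds of part `X` played in a place `p` of a branching process of
`N_CP`: `r^X(p) = max(⌈|{round transitions of part X causally preceding p}| / 3⌉, 1)`. -/
noncomputable def roundsIn {P T Col : Type} (N : PreNet P T) (ft : T → CPTrans Col)
    (X : Bool) (p : P) : ℕ :=
  max ((Nat.card {t : T // N.le (Sum.inr t) (Sum.inl p) ∧
    ∃ r k, ft t = CPTrans.round X r k} + 2) / 3) 1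

/-- An ω bipartite colouring `f` (coordinates starting at 1) satisfies the
colouring constraint `(Ci, DP, HP, VP)`: the initial colour is in `Ci` and no
diagonal, horizontal or vertical pattern of `f` is forbidden. -/
def SatisfiesColouring {Col : Type} (Ci : Set Col) (DP HP VP : Set (Col × Col))
    (f : ℕ → ℕ → Col) : Prop :=
  f 1 1 ∈ Ci ∧ ∀ x y : ℕ, 1 ≤ x → 1 ≤ y →
    (f x y, f (x + 1) (y + 1)) ∉ DP ∧ (f x y, f (x + 1) y) ∉ HP ∧
    (f x y, f x (y + 1)) ∉ VP

end PG

/-!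
Because only system places may refuse a transition, justified refusal forces a winning strategy to
contain, for each part of `N_CP`, the complete run of its three environment players, and every
environment place of the strategy lies on one of these two runs. A system place above `s_a` is
therefore produced by the check of player `a` on the places it reached at some times `mT` and
`mB`, and the round transitions below it are exactly the steps before these times, so its round
counts are the rounds of `mT` and `mB`.

If the places reached by two different players meet in both parts within the same rounds, the
checks of all three players and the colour choice of the first one can be fired from a common cut;
deadlock avoidance then forces a colour choice of the second player, and `B_Same` makes the two
colours equal. Chains of such meetings connect every check of rounds `(x, y)` to the check of
player `1` at times `3x - 1` and `3y - 1`, whose colour is unique by determinism.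
-/

namespace Set.BijOn

variable {α β : Type*} {f : α → β} {s : Set α}

lemma exists_eq_pair {b₁ b₂ : β} (h : BijOn f s {b₁, b₂}) :
    ∃ a₁ a₂, s = {a₁, a₂} ∧ f a₁ = b₁ ∧ f a₂ = b₂ := by
  obtain ⟨a₁, ha₁, rfl⟩ := h.surjOn (mem_insert _ _)
  obtain ⟨a₂, ha₂, rfl⟩ := h.surjOn (mem_insert_of_mem _ rfl)
  refine ⟨a₁, a₂, subset_antisymm (fun a ha => ?_) (insert_subset ha₁ (singleton_subset_iff.2 ha₂)),
    rfl, rfl⟩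
  rcases h.mapsTo ha with h' | h'
  · exact Or.inl (h.injOn ha ha₁ h')
  · exact Or.inr (h.injOn ha ha₂ h')

lemma exists_eq_singleton {b : β} (h : BijOn f s {b}) : ∃ a, s = {a} ∧ f a = b := by
  obtain ⟨a, ha, rfl⟩ := h.surjOn (mem_singleton _)
  exact ⟨a, subset_antisymm (fun a' ha' => h.injOn ha' ha (h.mapsTo ha'))
    (singleton_subset_iff.2 ha), rfl⟩

end Set.BijOn

namespace PG

/-! ### Occurrence nets -/

namespace PreNet

variable {P T : Type} {N : PreNet P T}

lemma le_of_mem_pre {z : P} {w : T} (h : z ∈ N.pre w) : N.le (.inl z) (.inr w) :=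
  Relation.ReflTransGen.single h

lemma le_of_mem_post {z : P} {w : T} (h : z ∈ N.post w) : N.le (.inr w) (.inl z) :=
  Relation.ReflTransGen.single h

lemma le_trans {x y z : P ⊕ T} (h₁ : N.le x y) (h₂ : N.le y z) : N.le x z :=
  Relation.ReflTransGen.trans h₁ h₂

lemma le_inl_inl {q q' : P} (h : N.le (.inl q) (.inl q')) :
    q = q' ∨ ∃ w, q ∈ N.pre w ∧ N.le (.inr w) (.inl q') := by
  rcases Relation.ReflTransGen.cases_head h with h | ⟨_ | w, hflow, hle⟩
  · exact Or.inl (Sum.inl_injective h)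
  · exact absurd hflow id
  · exact Or.inr ⟨w, hflow, hle⟩

lemma le_inr_inr {v w : T} (h : N.le (.inr v) (.inr w)) :
    v = w ∨ ∃ z ∈ N.pre w, N.le (.inr v) (.inl z) := by
  rcases Relation.ReflTransGen.cases_tail h with h | ⟨_ | v', hle, hflow⟩
  · exact Or.inl (Sum.inr_injective h.symm)
  · exact Or.inr ⟨_, hflow, hle⟩
  · exact absurd hflow id

lemma le_inr_inl {v : T} {q : P} (h : N.le (.inr v) (.inl q)) :
    ∃ w, q ∈ N.post w ∧ N.le (.inr v) (.inr w) := by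
  rcases Relation.ReflTransGen.cases_tail h with h | ⟨_ | w, hle, hflow⟩
  · exact absurd h Sum.inl_ne_inr
  · exact absurd hflow id
  · exact ⟨w, hflow, hle⟩

lemma concurrent_comm {x y : P ⊕ T} (h : N.concurrent x y) : N.concurrent y x := by
  obtain ⟨h₁, h₂, h₃⟩ := h
  refine ⟨h₂, h₁, fun ⟨t₁, t₂, hne, hq, hl₁, hl₂⟩ => h₃ ⟨t₂, t₁, hne.symm, ?_, hl₂, hl₁⟩⟩
  rwa [Set.inter_comm]

lemma Fires.append {M M' M'' : Set P} {l l' : List T} (h : N.Fires M l M')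
    (h' : N.Fires M' l' M'') : N.Fires M (l ++ l') M'' := by
  induction h with
  | nil => exact h'
  | cons he _ ih => exact .cons he (ih h')

lemma reachable_fire {M : Set P} {t : T} (hM : N.reachable M) (ht : N.enabled M t) :
    N.reachable (N.fire M t) := by
  obtain ⟨l, hl⟩ := hM
  exact ⟨l ++ [t], hl.append (.cons ht (.nil _))⟩

lemma Fires.of_disjoint {R : Set P} {l : List T}
    (hpre : l.Pairwise fun t t' => Disjoint (N.pre t) (N.pre t'))
    (hR : ∀ t ∈ l, Disjoint (N.pre t) R)
    (hpost : ∀ t ∈ l, ∀ t' ∈ l, Disjoint (N.post t) (N.pre t')) :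
    N.Fires (R ∪ ⋃ t ∈ l, N.pre t) l (R ∪ ⋃ t ∈ l, N.post t) := by
  induction l generalizing R with
  | nil => simpa using Fires.nil R
  | cons t l ih =>
    simp only [List.pairwise_cons, List.mem_cons, forall_eq_or_imp] at hpre hR hpost
    refine .cons (fun z hz => by simp [hz]) ?_
    have hfire : N.fire (R ∪ ⋃ t' ∈ t :: l, N.pre t') t = (R ∪ N.post t) ∪ ⋃ t' ∈ l, N.pre t' := by
      ext z
      simp only [fire, List.mem_cons, Set.iUnion_iUnion_eq_or_left, Set.mem_union, Set.mem_sdiff,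
        Set.mem_iUnion, exists_prop]
      constructor
      · rintro (⟨(hz | hz | hz), hn⟩ | hz)
        exacts [Or.inl (Or.inl hz), absurd hz hn, Or.inr hz, Or.inl (Or.inr hz)]
      · rintro ((hz | hz) | ⟨t', ht', hz⟩)
        · exact Or.inl ⟨Or.inl hz, fun h => Set.disjoint_left.1 hR.1 h hz⟩
        · exact Or.inr hz
        · exact Or.inl ⟨Or.inr (Or.inr ⟨t', ht', hz⟩),
            fun h => Set.disjoint_left.1 (hpre.1 t' ht') h hz⟩
    have := ih (R := R ∪ N.post t) hpre.2
      (fun t' ht' => Disjoint.union_right (hR.2 t' ht') (hpost.1.2 t' ht').symm)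
      (fun t' ht' t'' ht'' => hpost.2 t' ht' |>.2 t'' ht'')
    rw [hfire]
    convert this using 1
    simp only [List.mem_cons, Set.iUnion_iUnion_eq_or_left, Set.union_assoc]

end PreNet

namespace IsOccurrenceNet

open PreNet

variable {P T : Type} {N : PreNet P T} (hN : IsOccurrenceNet N)
include hN

lemma wellFounded_lt : WellFounded N.lt := by
  have key : ∀ x y, N.lt x y → {z | N.le z x}.ncard < {z | N.le z y}.ncard := fun x y hxy =>
    Set.ncard_lt_ncard ⟨fun z hz => le_trans hz hxy.to_reflTransGen,
      fun hsub => hN.acyclic x (hxy.trans_left (hsub (Relation.ReflTransGen.refl : N.le y y)))⟩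
      (hN.finitely_preceded y)
  exact Subrelation.wf (key _ _) (measure _).wf

lemma mem_init_iff {q : P} : q ∈ N.init ↔ ∀ t, q ∉ N.post t := by
  rw [hN.init_eq]; rfl

lemma eq_of_mem_post {q : P} {w w' : T} (h : q ∈ N.post w) (h' : q ∈ N.post w') : w = w' :=
  hN.place_pre_subsingleton q h h'

lemma not_le_of_mem_pre {w : T} {z₁ z₂ : P} (hz₁ : z₁ ∈ N.pre w) (hz₂ : z₂ ∈ N.pre w)
    (hne : z₁ ≠ z₂) : ¬ N.le (.inl z₁) (.inl z₂) := by
  intro hle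
  rcases le_inl_inl hle with rfl | ⟨v, hv, hvz⟩
  · exact hne rfl
  by_cases hvw : v = w
  · subst hvw
    exact hN.acyclic (.inl z₂) (.head' (show N.flow (.inl z₂) (.inr v) from hz₂) hvz)
  · exact hN.no_self_conflict w
      ⟨v, w, hvw, ⟨z₁, hv, hz₁⟩, le_trans hvz (le_of_mem_pre hz₂), .refl⟩

lemma concurrent_of_mem_pre {w : T} {z₁ z₂ : P} (hz₁ : z₁ ∈ N.pre w) (hz₂ : z₂ ∈ N.pre w)
    (hne : z₁ ≠ z₂) : N.concurrent (.inl z₁) (.inl z₂) :=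
  ⟨hN.not_le_of_mem_pre hz₁ hz₂ hne, hN.not_le_of_mem_pre hz₂ hz₁ hne.symm,
    fun ⟨t₁, t₂, hne', hq, h₁, h₂⟩ => hN.no_self_conflict w
      ⟨t₁, t₂, hne', hq, le_trans h₁ (le_of_mem_pre hz₁), le_trans h₂ (le_of_mem_pre hz₂)⟩⟩

end IsOccurrenceNet

lemma IsWinningStrategy.exists_trans_of_env {P₀ T₀ P T : Type} {G : PetriGame P₀ T₀}
    {N : PreNet P T} {fp : P → P₀} {ft : T → T₀} (hwin : IsWinningStrategy G N fp ft)
    {C : Set P} (hC : C.Pairwise fun x y => N.concurrent (.inl x) (.inl y)) {t₀ : T₀}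
    (himg : fp '' C = G.net.pre t₀) (henv : ∀ z ∈ C, fp z ∉ G.system) :
    ∃ t, ft t = t₀ ∧ N.pre t = C := by
  by_contra hno
  obtain ⟨z, hz, hsys, -⟩ := hwin.justified_refusal C hC t₀ himg hno
  exact henv z hz hsys

/-! ### The schedule of the environment players

Step `n` of a part leads from time `n` to time `n + 1`: it is the transition
`round X (roundIndex R) (phase n)` of round `R = n / 3 + 1` and synchronises the players `phase n`
and `phase n + 1`. A place reached at time `m` belongs to round `roundOf m`, the round of the step
producing it (round `1` for the initial places). -/

def phase (n : ℕ) : Fin 3 := ⟨n % 3, Nat.mod_lt _ (by norm_num)⟩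

def roundOf (m : ℕ) : ℕ := max ((m + 2) / 3) 1

def roundIndex (R : ℕ) : Fin 3 := if R ≤ 1 then 0 else if R % 2 = 0 then 1 else 2

/-- The place index of player `a` in phase `k` of a round whose players start on index `s`. -/
def posIn (k a : Fin 3) (s : Fin 6) : Fin 6 :=
  ![s, if a = 2 then s else nxt s, if a = 1 then nxt (nxt s) else nxt s] k

def pos (a : Fin 3) (n : ℕ) : Fin 6 := posIn (phase n) a (roundStart (roundIndex (n / 3 + 1)))

def stepTrans (Col : Type) (X : Bool) (n : ℕ) : CPTrans Col :=
  CPTrans.round X (roundIndex (n / 3 + 1)) (phase n)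

def Moves (a : Fin 3) (n : ℕ) : Prop := (n + 2) % 3 ≠ a.val

instance (a : Fin 3) (n : ℕ) : Decidable (Moves a n) := by unfold Moves; infer_instance

def Arrives (a : Fin 3) (m : ℕ) : Prop := m = 0 ∨ Moves a (m - 1)

instance (a : Fin 3) (m : ℕ) : Decidable (Arrives a m) := by unfold Arrives; infer_instance

def lastArrival (a : Fin 3) (m : ℕ) : ℕ := if Arrives a m then m else m - 1

/-- Player `a`, having arrived at time `m`, is still on the same place at time `m'`. -/
def Stays (a : Fin 3) (m m' : ℕ) : Prop := m' = m ∨ (m' = m + 1 ∧ ¬ Moves a m)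

lemma self_ne_add_one (k : Fin 3) : k ≠ k + 1 := by revert k; decide

lemma phase_succ (n : ℕ) : phase (n + 1) = phase n + 1 := by
  ext; simp only [phase, Fin.val_add]; omega

lemma moves_iff (a : Fin 3) (n : ℕ) : Moves a n ↔ a = phase n ∨ a = phase n + 1 := by
  simp only [Moves, phase, Fin.ext_iff, Fin.val_add]
  omega

lemma moves_phase (n : ℕ) : Moves (phase n) n := (moves_iff _ _).2 (Or.inl rfl)

lemma moves_phase_add_one (n : ℕ) : Moves (phase n + 1) n := (moves_iff _ _).2 (Or.inr rfl)

lemma arrives_zero (a : Fin 3) : Arrives a 0 := Or.inl rfl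

lemma arrives_succ_iff {a : Fin 3} {n : ℕ} : Arrives a (n + 1) ↔ Moves a n := by
  simp [Arrives]

lemma arrives_of_not_moves {a : Fin 3} {n : ℕ} (h : ¬ Moves a n) : Arrives a n := by
  unfold Arrives Moves at *; omega

lemma arrives_phase (n : ℕ) : Arrives (phase n) n := by
  simp only [Arrives, Moves, phase]; omega

lemma lastArrival_le (a : Fin 3) (m : ℕ) : lastArrival a m ≤ m := by
  unfold lastArrival; split_ifs <;> omega

lemma lastArrival_of_arrives {a : Fin 3} {m : ℕ} (h : Arrives a m) : lastArrival a m = m :=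
  if_pos h

lemma lastArrival_succ (a : Fin 3) (n : ℕ) :
    lastArrival a (n + 1) = if Moves a n then n + 1 else lastArrival a n := by
  split_ifs with h
  · exact lastArrival_of_arrives (arrives_succ_iff.2 h)
  · rw [lastArrival_of_arrives (arrives_of_not_moves h), lastArrival,
      if_neg (mt arrives_succ_iff.1 h), Nat.add_sub_cancel]

lemma roundStart_roundIndex_succ {R : ℕ} (hR : 1 ≤ R) :
    roundStart (roundIndex (R + 1)) = nxt (nxt (roundStart (roundIndex R))) := by
  unfold roundIndex
  split_ifs <;> first | rfl | omega

lemma pos_zero (a : Fin 3) : pos a 0 = 0 := by fin_cases a <;> rfl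

lemma pos_succ (a : Fin 3) (n : ℕ) :
    pos a (n + 1) = if Moves a n then nxt (pos a n) else pos a n := by
  rw [if_congr (moves_iff a n) rfl rfl]
  unfold pos
  rw [phase_succ]
  by_cases hk : n % 3 = 2
  · rw [show (n + 1) / 3 + 1 = (n / 3 + 1) + 1 by omega, roundStart_roundIndex_succ (by omega),
      show phase n = 2 from Fin.ext hk]
    generalize roundIndex (n / 3 + 1) = r
    revert a r; decide
  · have hk' : phase n ≠ 2 := fun h => hk (congrArg Fin.val h)
    rw [show (n + 1) / 3 = n / 3 by omega]
    generalize roundIndex (n / 3 + 1) = r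
    generalize phase n = k at hk' ⊢
    revert a r k; decide

lemma pos_eq_of_stays {a : Fin 3} {m m' : ℕ} (h : Stays a m m') : pos a m' = pos a m := by
  rcases h with rfl | ⟨rfl, h⟩
  exacts [rfl, by rw [pos_succ, if_neg h]]

/-- The classes of `sameRound`: the place indices used during a round starting on `roundStart r`. -/
def roundPlaces : Fin 3 → Finset (Fin 6) := ![{0, 1, 2}, {3, 4}, {5, 2}]

lemma pos_mem_roundPlaces {a : Fin 3} {m : ℕ} (h : Arrives a m) :
    pos a m ∈ roundPlaces (roundIndex (roundOf m)) := by
  rcases m with _ | n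
  · rw [pos_zero]; decide
  rw [pos_succ, if_pos (arrives_succ_iff.1 h), show roundOf (n + 1) = n / 3 + 1 by
    unfold roundOf; omega]
  have hmv := (moves_iff a n).1 (arrives_succ_iff.1 h)
  clear h
  unfold pos
  generalize roundIndex (n / 3 + 1) = r
  generalize phase n = k at hmv ⊢
  revert a k r; decide

lemma sameRound_pos {a d : Fin 3} {m m' : ℕ} (ha : Arrives a m) (hd : Arrives d m')
    (h : roundOf m = roundOf m') : sameRound (pos a m) (pos d m') := by
  have h₁ := pos_mem_roundPlaces ha
  have h₂ := pos_mem_roundPlaces hd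
  rw [h] at h₁
  generalize roundIndex (roundOf m') = r at h₁ h₂
  generalize pos a m = j at h₁
  generalize pos d m' = k at h₂
  unfold sameRound
  revert r j k; decide

/-- The places that player `a` reaches at time `m` and player `d` reaches at time `m'` belong to
the same round and are occupied at a common time. -/
def Meets (a : Fin 3) (m : ℕ) (d : Fin 3) (m' : ℕ) : Prop :=
  Arrives a m ∧ Arrives d m' ∧ roundOf m = roundOf m' ∧ Stays a m (max m m') ∧ Stays d m' (max m m')

lemma Meets.sameRound_pos {a d : Fin 3} {m m' : ℕ} (h : Meets a m d m') :
    sameRound (pos a (max m m')) (pos d (max m m')) := by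
  obtain ⟨ha, hd, hr, hsa, hsd⟩ := h
  rw [pos_eq_of_stays hsa, pos_eq_of_stays hsd]
  exact PG.sameRound_pos ha hd hr

lemma exists_meets_zero_two {m : ℕ} (h : Arrives 0 m) : ∃ m', Meets 0 m 2 m' := by
  refine ⟨if m % 3 = 1 then m + 1 else m, ?_⟩
  simp only [Meets, Arrives, Stays, Moves, roundOf] at *
  split_ifs <;> omega

lemma exists_meets_two_zero {m : ℕ} (h : Arrives 2 m) : ∃ m', m' ≠ 0 ∧ Meets 2 m 0 m' := by
  refine ⟨if m = 0 then 1 else if m % 3 = 2 then m - 1 else m, ?_⟩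
  simp only [Meets, Arrives, Stays, Moves, roundOf] at *
  split_ifs <;> omega

lemma exists_meets_one_zero {m : ℕ} (h : Arrives 1 m) : ∃ m', Meets 1 m 0 m' := by
  refine ⟨if m = 0 then 0 else 3 * roundOf m - 2, ?_⟩
  simp only [Meets, Arrives, Stays, Moves, roundOf] at *
  split_ifs <;> omega

lemma meets_zero_one {m : ℕ} (h : Arrives 0 m) (hm : m ≠ 0) : Meets 0 m 1 (3 * roundOf m - 1) := by
  simp only [Meets, Arrives, Stays, Moves, roundOf] at *
  omega

/-! ### Branching processes of `N_CP` -/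

section Labels

variable {Col : Type}

lemma pre_round (X : Bool) (r k : Fin 3) : (cpNet Col).pre (CPTrans.round X r k) =
    {CPPlace.env X k (posIn k k (roundStart r)),
      CPPlace.env X (k + 1) (posIn k (k + 1) (roundStart r))} := by
  fin_cases k <;> rfl

lemma post_round (X : Bool) (r k : Fin 3) : (cpNet Col).post (CPTrans.round X r k) =
    {CPPlace.env X k (nxt (posIn k k (roundStart r))),
      CPPlace.env X (k + 1) (nxt (posIn k (k + 1) (roundStart r)))} := by
  fin_cases k <;> rfl

lemma pre_stepTrans (X : Bool) (n : ℕ) : (cpNet Col).pre (stepTrans Col X n) =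
    {CPPlace.env X (phase n) (pos (phase n) n),
      CPPlace.env X (phase n + 1) (pos (phase n + 1) n)} :=
  pre_round X _ _

lemma post_stepTrans (X : Bool) (n : ℕ) : (cpNet Col).post (stepTrans Col X n) =
    {CPPlace.env X (phase n) (pos (phase n) (n + 1)),
      CPPlace.env X (phase n + 1) (pos (phase n + 1) (n + 1))} := by
  simp only [pos_succ, moves_iff, true_or, or_true, if_true]
  exact post_round X _ _

/-- Two players in their positions at time `n` can only synchronise in step `n`. -/
lemma stepTrans_eq_of_mem_pre {X : Bool} {n : ℕ} {p₁ p₂ r k : Fin 3} (hne : p₁ ≠ p₂)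
    (h₁ : CPPlace.env X p₁ (pos p₁ n) ∈ (cpNet Col).pre (CPTrans.round X r k))
    (h₂ : CPPlace.env X p₂ (pos p₂ n) ∈ (cpNet Col).pre (CPTrans.round X r k)) :
    CPTrans.round X r k = stepTrans Col X n := by
  simp only [pre_round, Set.mem_insert_iff, Set.mem_singleton_iff, CPPlace.env.injEq, true_and]
    at h₁ h₂
  unfold pos at h₁ h₂
  unfold stepTrans
  generalize roundIndex (n / 3 + 1) = r' at h₁ h₂ ⊢
  generalize phase n = k' at h₁ h₂ ⊢
  simp only [CPTrans.round.injEq, true_and]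
  revert p₁ p₂ r k r' k'
  decide

lemma cpNet_exists_round_of_mem_post {t₀ : CPTrans Col} {X : Bool} {a : Fin 3} {i : Fin 6}
    (h : CPPlace.env X a i ∈ (cpNet Col).post t₀) : ∃ r k, t₀ = CPTrans.round X r k := by
  rcases t₀ with ⟨Y, r, k⟩ | ⟨_, _, _⟩ | ⟨_, _⟩
  · rw [post_round] at h
    rcases h with h | h <;> cases h <;> exact ⟨_, _, rfl⟩
  all_goals simp [cpNet] at h

lemma cpNet_exists_env_of_mem_pre {q : CPPlace Col} {X : Bool} {r k : Fin 3}
    (h : q ∈ (cpNet Col).pre (CPTrans.round X r k)) : ∃ a i, q = CPPlace.env X a i := by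
  rw [pre_round] at h
  rcases h with rfl | rfl <;> exact ⟨_, _, rfl⟩

lemma env_not_mem_system {Ci : Set Col} {DP HP VP : Set (Col × Col)} {X : Bool} {a : Fin 3}
    {i : Fin 6} : CPPlace.env X a i ∉ (cpGame Col Ci DP HP VP).system := by
  rintro ⟨b, h⟩
  exact absurd h (by simp)

end Labels

section BranchingProcess

open PreNet

variable {Col : Type} {P T : Type} {N : PreNet P T} {fp : P → CPPlace Col} {ft : T → CPTrans Col}

def PartNode (fp : P → CPPlace Col) (ft : T → CPTrans Col) (X : Bool) : P ⊕ T → Prop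
  | .inl z => ∃ a i, fp z = CPPlace.env X a i
  | .inr v => ∃ r k, ft v = CPTrans.round X r k

variable (hB : IsBranchingProcess (cpNet Col) N fp ft)
include hB

lemma fp_mem_pre {z : P} {w : T} (h : z ∈ N.pre w) : fp z ∈ (cpNet Col).pre (ft w) :=
  (hB.hom.pre_bij w).mapsTo h

lemma fp_mem_post {z : P} {w : T} (h : z ∈ N.post w) : fp z ∈ (cpNet Col).post (ft w) :=
  (hB.hom.post_bij w).mapsTo h

lemma partNode_of_le {X : Bool} {x y : P ⊕ T} (hxy : N.le x y) (hy : PartNode fp ft X y) :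
    PartNode fp ft X x := by
  induction hxy using Relation.ReflTransGen.head_induction_on with
  | refl => exact hy
  | @head x' y' hflow _ ih =>
    rcases x' with z | w <;> rcases y' with z' | w'
    · exact absurd hflow id
    · obtain ⟨r, k, hk⟩ := ih
      have := fp_mem_pre hB (show z ∈ N.pre w' from hflow)
      rw [hk] at this
      exact cpNet_exists_env_of_mem_pre this
    · obtain ⟨a, i, hz⟩ := ih
      have := fp_mem_post hB (show z' ∈ N.post w from hflow)
      rw [hz] at this
      exact cpNet_exists_round_of_mem_post this
    · exact absurd hflow id

lemma concurrent_top_bot {zT zB : P} {a b : Fin 3} {j k : Fin 6}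
    (hzT : fp zT = CPPlace.env true a j) (hzB : fp zB = CPPlace.env false b k) :
    N.concurrent (.inl zT) (.inl zB) := by
  have part_top : PartNode fp ft true (.inl zT) := ⟨a, j, hzT⟩
  have part_bot : PartNode fp ft false (.inl zB) := ⟨b, k, hzB⟩
  refine ⟨fun h => ?_, fun h => ?_, ?_⟩
  · obtain ⟨_, _, h⟩ := partNode_of_le hB h part_bot
    simp [hzT] at h
  · obtain ⟨_, _, h⟩ := partNode_of_le hB h part_top
    simp [hzB] at h
  · rintro ⟨t₁, t₂, -, ⟨q, hq₁, hq₂⟩, h₁, h₂⟩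
    obtain ⟨r₁, k₁, e₁⟩ := partNode_of_le hB h₁ part_top
    obtain ⟨r₂, k₂, e₂⟩ := partNode_of_le hB h₂ part_bot
    have l₁ := fp_mem_pre hB hq₁
    have l₂ := fp_mem_pre hB hq₂
    rw [e₁] at l₁
    rw [e₂] at l₂
    obtain ⟨_, _, h⟩ := cpNet_exists_env_of_mem_pre l₁
    obtain ⟨_, _, h'⟩ := cpNet_exists_env_of_mem_pre l₂
    simp [h] at h'

lemma exists_post_check {u : T} {a : Fin 3} {j k : Fin 6} (hft : ft u = .check a j k) :
    ∃ kp s, N.post u = {kp, s} ∧ fp kp = .chk a j k ∧ fp s = .sys a := by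
  have hbij := hB.hom.post_bij u
  rw [hft] at hbij
  exact hbij.exists_eq_pair

lemma fp_post_check {u : T} {a : Fin 3} {j k : Fin 6} {z : P} (hft : ft u = .check a j k)
    (hz : z ∈ N.post u) : fp z = .chk a j k ∨ fp z = .sys a := by
  have := fp_mem_post hB hz
  rwa [hft] at this

lemma pre_colour {σ : T} {a : Fin 3} {c : Col} {s : P} (hft : ft σ = .colour a c)
    (hs : s ∈ N.pre σ) : N.pre σ = {s} := by
  have hbij := hB.hom.pre_bij σ
  rw [hft] at hbij
  obtain ⟨z, hz, -⟩ := hbij.exists_eq_singleton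
  rw [hz] at hs ⊢
  rw [hs]

lemma exists_post_colour {σ : T} {a : Fin 3} {c : Col} (hft : ft σ = .colour a c) :
    ∃ o, N.post σ = {o} ∧ fp o = .col c a := by
  have hbij := hB.hom.post_bij σ
  rw [hft] at hbij
  exact hbij.exists_eq_singleton

lemma reachable_fire_colour {M : Set P} {σ : T} {s : P} {a : Fin 3} {c : Col}
    (hM : N.reachable M) (hs : s ∈ M) (hσ : s ∈ N.pre σ) (hft : ft σ = .colour a c) :
    ∃ o, fp o = .col c a ∧ N.reachable (M \ {s} ∪ {o}) := by
  obtain ⟨o, hpost, ho⟩ := exists_post_colour hB hft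
  have hpre := pre_colour hB hft hσ
  have := reachable_fire hM (show N.enabled M σ by rwa [enabled, hpre, Set.singleton_subset_iff])
  rw [fire, hpre, hpost] at this
  exact ⟨o, ho, this⟩

lemma exists_colour_of_enabled {M : Set P} (henv : ∀ z ∈ M, ∀ X a i, fp z ≠ .env X a i) {v : T}
    (hv : N.enabled M v) : ∃ z g c, z ∈ N.pre v ∧ z ∈ M ∧ fp z = .sys g ∧ ft v = .colour g c := by
  obtain ⟨z, hz⟩ := hB.occ.toIsPetriNet.pre_nonempty v
  have hlabel := fp_mem_pre hB hz
  rcases hftv : ft v with ⟨X, r, k⟩ | ⟨a, j, k⟩ | ⟨g, c⟩ <;> rw [hftv] at hlabel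
  · obtain ⟨a, i, he⟩ := cpNet_exists_env_of_mem_pre hlabel
    exact absurd he (henv z (hv hz) X a i)
  · rcases hlabel with he | he
    exacts [absurd he (henv z (hv hz) _ _ _), absurd he (henv z (hv hz) _ _ _)]
  · exact ⟨z, g, c, hz, hv hz, hlabel, rfl⟩

lemma exists_check_of_sys {p : P} {a : Fin 3} (hp : fp p = .sys a) :
    ∃ u j k, p ∈ N.post u ∧ ft u = .check a j k := by
  obtain ⟨u, hu⟩ : ∃ u, p ∈ N.post u := by
    by_contra hno
    obtain ⟨X, b, hXb⟩ := hB.hom.init_bij.mapsTo (hB.occ.mem_init_iff.2 fun w hw => hno ⟨w, hw⟩)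
    rw [hp] at hXb
    exact absurd hXb (by simp)
  have hlabel := fp_mem_post hB hu
  rw [hp] at hlabel
  rcases hftu : ft u with ⟨X, r, k⟩ | ⟨b, j, k⟩ | ⟨b, c⟩ <;> rw [hftu] at hlabel
  · rw [post_round] at hlabel
    rcases hlabel with h | h <;> exact absurd h (by simp)
  · rcases hlabel with h | h
    · exact absurd h (by simp)
    · exact ⟨u, j, k, hu, by rw [CPPlace.sys.inj h, hftu]⟩
  · exact absurd hlabel (by simp [cpNet])

end BranchingProcess

lemma colour_eq_of_sameRound {Col : Type} {Ci : Set Col} {DP HP VP : Set (Col × Col)} {P T : Type}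
    {N : PreNet P T} {fp : P → CPPlace Col} {ft : T → CPTrans Col}
    (hwin : IsWinningStrategy (cpGame Col Ci DP HP VP) N fp ft) {M : Set P} (hM : N.reachable M)
    {k₁ k₂ o₁ o₂ : P} {a d : Fin 3} {j j' i i' : Fin 6} {c₁ c₂ : Col}
    (hk₁ : k₁ ∈ M) (hfk₁ : fp k₁ = .chk a j j') (hk₂ : k₂ ∈ M) (hfk₂ : fp k₂ = .chk d i i')
    (ho₁ : o₁ ∈ M) (hfo₁ : fp o₁ = .col c₁ a) (ho₂ : o₂ ∈ M) (hfo₂ : fp o₂ = .col c₂ d)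
    (hT : sameRound j i) (hB : sameRound j' i') : c₁ = c₂ := by
  by_contra hne
  exact hwin.safety M hM (Or.inl ⟨a, d, j, j', i, i', c₁, c₂, ⟨k₁, hk₁, hfk₁⟩, ⟨k₂, hk₂, hfk₂⟩,
    ⟨o₁, ho₁, hfo₁⟩, ⟨o₂, ho₂, hfo₂⟩, Or.inl ⟨hT, hB, hne⟩⟩)

lemma exists_check {Col : Type} {Ci : Set Col} {DP HP VP : Set (Col × Col)} {P T : Type}
    {N : PreNet P T} {fp : P → CPPlace Col} {ft : T → CPTrans Col}
    (hwin : IsWinningStrategy (cpGame Col Ci DP HP VP) N fp ft) {zT zB : P} {a : Fin 3}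
    {j k : Fin 6} (hT : fp zT = .env true a j) (hB : fp zB = .env false a k) :
    ∃ u, ft u = .check a j k ∧ N.pre u = {zT, zB} := by
  have hconc := concurrent_top_bot hwin.isBP hT hB
  refine hwin.exists_trans_of_env
    (Set.pairwise_pair.2 fun _ => ⟨hconc, PreNet.concurrent_comm hconc⟩)
    (by rw [Set.image_pair, hT, hB]; rfl) ?_
  rintro z (rfl | rfl)
  exacts [hT ▸ env_not_mem_system, hB ▸ env_not_mem_system]

/-! ### The runs of the environment -/

section Runs

open PreNet

variable {Col : Type} {P T : Type} {N : PreNet P T} {fp : P → CPPlace Col} {ft : T → CPTrans Col}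

/-- The first `n` steps of the run of part `X`: `place m a` is the place of player `a` at time
`m`, and `step m` is the transition of step `m`. -/
structure IsRunUpTo (N : PreNet P T) (fp : P → CPPlace Col) (X : Bool) (place : ℕ → Fin 3 → P)
    (step : ℕ → T) (n : ℕ) : Prop where
  fp_place : ∀ m ≤ n, ∀ a, fp (place m a) = .env X a (pos a m)
  le_place_iff : ∀ m ≤ n, ∀ a v,
    N.le (.inr v) (.inl (place m a)) ↔ ∃ j < lastArrival a m, v = step j
  pre_step : ∀ m < n, N.pre (step m) = {place m (phase m), place m (phase m + 1)}
  place_succ_of_not_moves : ∀ m < n, ∀ a, ¬ Moves a m → place (m + 1) a = place m a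

namespace IsRunUpTo

variable {X : Bool} {place : ℕ → Fin 3 → P} {step : ℕ → T} {n : ℕ}
  (h : IsRunUpTo N fp X place step n)
include h

lemma eq_of_fp_place {m m' : ℕ} (hm : m ≤ n) (hm' : m' ≤ n) {a b : Fin 3}
    (he : place m a = place m' b) : a = b := by
  have := h.fp_place m hm a
  rw [he, h.fp_place m' hm' b] at this
  exact (CPPlace.env.inj this).2.1.symm

lemma moves_of_mem_pre_step {j : ℕ} (hj : j < n) {a : Fin 3}
    (ha : place j a ∈ N.pre (step j)) : Moves a j := by
  rw [h.pre_step j hj] at ha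
  rcases ha with ha | ha <;> rw [moves_iff]
  · exact Or.inl (h.eq_of_fp_place hj.le hj.le ha)
  · exact Or.inr (h.eq_of_fp_place hj.le hj.le ha)

lemma not_mem_pre_step (hN : IsOccurrenceNet N) {m j : ℕ} (hm : m ≤ n) (hj : j < m)
    (a : Fin 3) : place m a ∉ N.pre (step j) := by
  intro hmem
  by_cases hja : j < lastArrival a m
  · have hle := (h.le_place_iff m hm a (step j)).2 ⟨j, hja, rfl⟩
    exact hN.acyclic _ (.head' (show N.flow (.inl (place m a)) (.inr (step j)) from hmem) hle)
  · have hnot : ¬ Arrives a m := fun ha => hja (by rwa [lastArrival_of_arrives ha])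
    obtain rfl : m = j + 1 := by
      unfold lastArrival at hja; rw [if_neg hnot] at hja; omega
    have hmv : ¬ Moves a j := mt arrives_succ_iff.2 hnot
    rw [h.place_succ_of_not_moves j hm a hmv] at hmem
    exact hmv (h.moves_of_mem_pre_step hm hmem)

lemma concurrent (hN : IsOccurrenceNet N) {m : ℕ} (hm : m ≤ n) {a d : Fin 3} (hne : a ≠ d) :
    N.concurrent (.inl (place m a)) (.inl (place m d)) := by
  have past_step : ∀ b v, N.le (.inr v) (.inl (place m b)) → ∃ j < m, v = step j := by
    intro b v hv
    obtain ⟨j, hj, rfl⟩ := (h.le_place_iff m hm b v).1 hv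
    exact ⟨j, hj.trans_le (lastArrival_le b m), rfl⟩
  have not_le : ∀ b e, b ≠ e → ¬ N.le (.inl (place m b)) (.inl (place m e)) := by
    intro b e hbe hle
    rcases le_inl_inl hle with he | ⟨w, hw, hwe⟩
    · exact hbe (h.eq_of_fp_place hm hm he)
    · obtain ⟨j, hj, rfl⟩ := past_step e w hwe
      exact h.not_mem_pre_step hN hm hj b hw
  have disjoint : ∀ j₁ j₂, j₁ < j₂ → j₂ < m → ∀ q ∈ N.pre (step j₂), q ∉ N.pre (step j₁) := by
    intro j₁ j₂ h₁₂ h₂ q hq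
    rw [h.pre_step j₂ (by omega)] at hq
    rcases hq with rfl | rfl <;> exact h.not_mem_pre_step hN (by omega) h₁₂ _
  refine ⟨not_le a d hne, not_le d a hne.symm, ?_⟩
  rintro ⟨t₁, t₂, hne', ⟨q, hq₁, hq₂⟩, h₁, h₂⟩
  obtain ⟨j₁, hj₁, rfl⟩ := past_step a t₁ h₁
  obtain ⟨j₂, hj₂, rfl⟩ := past_step d t₂ h₂
  rcases lt_trichotomy j₁ j₂ with hlt | rfl | hlt
  · exact disjoint j₁ j₂ hlt hj₂ q hq₂ hq₁
  · exact hne' rfl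
  · exact disjoint j₂ j₁ hlt hj₁ q hq₁ hq₂

end IsRunUpTo

section Construction

variable (N fp ft) [Nonempty P] [Nonempty T]

/-- A transition performing step `n` of part `X` from the places `s`; an arbitrary transition if
the strategy has none. -/
noncomputable def runStepFrom (X : Bool) (s : Fin 3 → P) (n : ℕ) : T :=
  Classical.epsilon fun u => ft u = stepTrans Col X n ∧ N.pre u = {s (phase n), s (phase n + 1)}

noncomputable def runPlace (X : Bool) : ℕ → Fin 3 → P
  | 0, a => Classical.epsilon fun z => z ∈ N.init ∧ fp z = .env X a 0
  | n + 1, a =>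
    if Moves a n then
      Classical.epsilon fun q =>
        q ∈ N.post (runStepFrom N ft X (runPlace X n) n) ∧ fp q = .env X a (pos a (n + 1))
    else runPlace X n a

noncomputable def runStep (X : Bool) (n : ℕ) : T := runStepFrom N ft X (runPlace N fp ft X n) n

variable {N fp ft}

lemma runPlace_zero (hB : IsBranchingProcess (cpNet Col) N fp ft) (X : Bool) (a : Fin 3) :
    runPlace N fp ft X 0 a ∈ N.init ∧ fp (runPlace N fp ft X 0 a) = .env X a 0 :=
  Classical.epsilon_spec (hB.hom.init_bij.surjOn ⟨X, a, rfl⟩)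

lemma runPlace_succ_of_not_moves {X : Bool} {n : ℕ} {a : Fin 3} (h : ¬ Moves a n) :
    runPlace N fp ft X (n + 1) a = runPlace N fp ft X n a := by
  rw [runPlace, if_neg h]

lemma runPlace_succ_of_moves (hB : IsBranchingProcess (cpNet Col) N fp ft) {X : Bool} {n : ℕ}
    (hft : ft (runStep N fp ft X n) = stepTrans Col X n) {a : Fin 3} (h : Moves a n) :
    runPlace N fp ft X (n + 1) a ∈ N.post (runStep N fp ft X n) ∧
      fp (runPlace N fp ft X (n + 1) a) = .env X a (pos a (n + 1)) := by
  rw [runPlace, if_pos h]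
  have hlabel : CPPlace.env X a (pos a (n + 1)) ∈ (cpNet Col).post (ft (runStep N fp ft X n)) := by
    rw [hft, post_stepTrans]
    rcases (moves_iff a n).1 h with rfl | rfl
    exacts [Or.inl rfl, Or.inr rfl]
  obtain ⟨q, hq, hfq⟩ := (hB.hom.post_bij _).surjOn hlabel
  have hex : ∃ q, q ∈ N.post (runStep N fp ft X n) ∧ fp q = .env X a (pos a (n + 1)) :=
    ⟨q, hq, hfq⟩
  exact Classical.epsilon_spec hex

variable {Ci : Set Col} {DP HP VP : Set (Col × Col)}
  (hwin : IsWinningStrategy (cpGame Col Ci DP HP VP) N fp ft)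
include hwin

lemma runStep_spec {X : Bool} {n : ℕ}
    (h : IsRunUpTo N fp X (runPlace N fp ft X) (runStep N fp ft X) n) :
    ft (runStep N fp ft X n) = stepTrans Col X n ∧
      N.pre (runStep N fp ft X n) =
        {runPlace N fp ft X n (phase n), runPlace N fp ft X n (phase n + 1)} := by
  have hconc := h.concurrent hwin.isBP.occ le_rfl (self_ne_add_one (phase n))
  have hex := hwin.exists_trans_of_env (t₀ := stepTrans Col X n)
    (Set.pairwise_pair.2 fun _ => ⟨hconc, concurrent_comm hconc⟩)
    (by rw [Set.image_pair, h.fp_place n le_rfl, h.fp_place n le_rfl, ← pre_stepTrans]; rfl)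
    (by rintro z (rfl | rfl) <;> rw [h.fp_place n le_rfl] <;> exact env_not_mem_system)
  exact Classical.epsilon_spec hex

lemma isRunUpTo_zero (X : Bool) :
    IsRunUpTo N fp X (runPlace N fp ft X) (runStep N fp ft X) 0 where
  fp_place m hm a := by
    obtain rfl := Nat.le_zero.1 hm
    rw [(runPlace_zero hwin.isBP X a).2, pos_zero]
  le_place_iff m hm a v := by
    obtain rfl := Nat.le_zero.1 hm
    simp only [lastArrival_of_arrives (arrives_zero a), Nat.not_lt_zero, false_and, exists_false,
      iff_false]
    intro hle
    obtain ⟨w, hw, -⟩ := le_inr_inl hle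
    exact (hwin.isBP.occ.mem_init_iff.1 (runPlace_zero hwin.isBP X a).1) w hw
  pre_step m hm := absurd hm (Nat.not_lt_zero m)
  place_succ_of_not_moves m hm := absurd hm (Nat.not_lt_zero m)

lemma le_runPlace_succ_iff {X : Bool} {n : ℕ}
    (h : IsRunUpTo N fp X (runPlace N fp ft X) (runStep N fp ft X) n) {a : Fin 3}
    (ha : Moves a n) (v : T) :
    N.le (.inr v) (.inl (runPlace N fp ft X (n + 1) a)) ↔ ∃ j < n + 1, v = runStep N fp ft X j := by
  obtain ⟨hft, hpre⟩ := runStep_spec hwin h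
  have hpost := (runPlace_succ_of_moves hwin.isBP hft ha).1
  constructor
  · intro hle
    obtain ⟨w, hw, hvw⟩ := le_inr_inl hle
    obtain rfl := hwin.isBP.occ.eq_of_mem_post hw hpost
    rcases le_inr_inr hvw with rfl | ⟨z, hz, hvz⟩
    · exact ⟨n, Nat.lt_succ_self n, rfl⟩
    rw [hpre] at hz
    obtain ⟨b, rfl⟩ : ∃ b, z = runPlace N fp ft X n b := by
      rcases hz with rfl | rfl <;> exact ⟨_, rfl⟩
    obtain ⟨j, hj, rfl⟩ := (h.le_place_iff n le_rfl b v).1 hvz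
    exact ⟨j, by have := lastArrival_le b n; omega, rfl⟩
  · rintro ⟨j, hj, rfl⟩
    refine le_trans ?_ (le_of_mem_post hpost)
    rcases Nat.lt_or_eq_of_le (Nat.lt_succ_iff.1 hj) with hj | rfl
    · -- player `phase n` arrived at time `n` and is consumed by step `n`
      have hmem : runPlace N fp ft X n (phase n) ∈ N.pre (runStep N fp ft X n) := by
        rw [hpre]; exact Or.inl rfl
      refine le_trans ((h.le_place_iff n le_rfl _ _).2 ⟨j, ?_, rfl⟩) (le_of_mem_pre hmem)
      rwa [lastArrival_of_arrives (arrives_phase n)]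
    · exact .refl

lemma IsRunUpTo.succ {X : Bool} {n : ℕ}
    (h : IsRunUpTo N fp X (runPlace N fp ft X) (runStep N fp ft X) n) :
    IsRunUpTo N fp X (runPlace N fp ft X) (runStep N fp ft X) (n + 1) := by
  obtain ⟨hft, hpre⟩ := runStep_spec hwin h
  refine ⟨fun m hm a => ?_, fun m hm a v => ?_, fun m hm => ?_, fun m hm => ?_⟩
  · rcases Nat.lt_or_eq_of_le hm with hm | rfl
    · exact h.fp_place m (Nat.lt_succ_iff.1 hm) a
    by_cases ha : Moves a n
    · exact (runPlace_succ_of_moves hwin.isBP hft ha).2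
    · rw [runPlace_succ_of_not_moves ha, pos_succ, if_neg ha, h.fp_place n le_rfl]
  · rcases Nat.lt_or_eq_of_le hm with hm | rfl
    · exact h.le_place_iff m (Nat.lt_succ_iff.1 hm) a v
    rw [lastArrival_succ]
    by_cases ha : Moves a n
    · rw [if_pos ha, le_runPlace_succ_iff hwin h ha]
    · rw [if_neg ha, runPlace_succ_of_not_moves ha, h.le_place_iff n le_rfl]
  · rcases Nat.lt_or_eq_of_le hm with hm | hm
    · exact h.pre_step m (Nat.succ_lt_succ_iff.1 hm)
    · obtain rfl := Nat.succ_injective hm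
      exact hpre
  · rcases Nat.lt_or_eq_of_le hm with hm | hm
    · exact h.place_succ_of_not_moves m (Nat.succ_lt_succ_iff.1 hm)
    · obtain rfl := Nat.succ_injective hm
      exact fun a ha => runPlace_succ_of_not_moves ha

lemma isRunUpTo_runPlace (X : Bool) (n : ℕ) :
    IsRunUpTo N fp X (runPlace N fp ft X) (runStep N fp ft X) n := by
  induction n with
  | zero => exact isRunUpTo_zero hwin X
  | succ n ih => exact ih.succ hwin

end Construction

structure IsRun (N : PreNet P T) (fp : P → CPPlace Col) (ft : T → CPTrans Col) (X : Bool)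
    (place : ℕ → Fin 3 → P) (step : ℕ → T) : Prop where
  upTo : ∀ n, IsRunUpTo N fp X place step n
  place_zero_mem_init : ∀ a, place 0 a ∈ N.init
  ft_step : ∀ m, ft (step m) = stepTrans Col X m
  place_succ_mem_post : ∀ m a, Moves a m → place (m + 1) a ∈ N.post (step m)

theorem exists_isRun {Ci : Set Col} {DP HP VP : Set (Col × Col)}
    (hwin : IsWinningStrategy (cpGame Col Ci DP HP VP) N fp ft) (X : Bool) :
    ∃ place step, IsRun N fp ft X place step := by
  have hinit := hwin.isBP.hom.init_bij.surjOn
  obtain ⟨z, -, hz⟩ := hinit (show CPPlace.env true 0 0 ∈ _ from ⟨_, _, rfl⟩)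
  obtain ⟨z', -, hz'⟩ := hinit (show CPPlace.env false 0 0 ∈ _ from ⟨_, _, rfl⟩)
  obtain ⟨u, -⟩ := exists_check hwin hz hz'
  have : Nonempty P := ⟨z⟩
  have : Nonempty T := ⟨u⟩
  exact ⟨runPlace N fp ft X, runStep N fp ft X, fun n => isRunUpTo_runPlace hwin X n,
    fun a => (runPlace_zero hwin.isBP X a).1,
    fun m => (runStep_spec hwin (isRunUpTo_runPlace hwin X m)).1,
    fun m a ha => (runPlace_succ_of_moves hwin.isBP
      (runStep_spec hwin (isRunUpTo_runPlace hwin X m)).1 ha).1⟩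

namespace IsRun

variable {X : Bool} {place : ℕ → Fin 3 → P} {step : ℕ → T}
  (h : IsRun N fp ft X place step)
include h

lemma fp_place (m : ℕ) (a : Fin 3) : fp (place m a) = .env X a (pos a m) :=
  (h.upTo m).fp_place m le_rfl a

lemma le_place_iff (m : ℕ) (a : Fin 3) (v : T) :
    N.le (.inr v) (.inl (place m a)) ↔ ∃ j < lastArrival a m, v = step j :=
  (h.upTo m).le_place_iff m le_rfl a v

lemma pre_step (m : ℕ) : N.pre (step m) = {place m (phase m), place m (phase m + 1)} :=
  (h.upTo (m + 1)).pre_step m (Nat.lt_succ_self m)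

lemma place_succ_of_not_moves {m : ℕ} {a : Fin 3} (ha : ¬ Moves a m) :
    place (m + 1) a = place m a :=
  (h.upTo (m + 1)).place_succ_of_not_moves m (Nat.lt_succ_self m) a ha

lemma eq_of_place_eq {m m' : ℕ} {a b : Fin 3} (he : place m a = place m' b) : a = b :=
  (h.upTo (max m m')).eq_of_fp_place (le_max_left _ _) (le_max_right _ _) he

lemma not_mem_pre_step (hN : IsOccurrenceNet N) {m j : ℕ} (hj : j < m) (a : Fin 3) :
    place m a ∉ N.pre (step j) :=
  (h.upTo m).not_mem_pre_step hN le_rfl hj a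

lemma mem_pre_step_iff (m : ℕ) (a : Fin 3) : place m a ∈ N.pre (step m) ↔ Moves a m := by
  refine ⟨(h.upTo (m + 1)).moves_of_mem_pre_step (Nat.lt_succ_self m), fun ha => ?_⟩
  rw [h.pre_step]
  rcases (moves_iff a m).1 ha with rfl | rfl
  exacts [Or.inl rfl, Or.inr rfl]

lemma place_eq_of_stays {m m' : ℕ} {a : Fin 3} (hs : Stays a m m') : place m' a = place m a := by
  rcases hs with rfl | ⟨rfl, ha⟩
  exacts [rfl, h.place_succ_of_not_moves ha]

lemma step_injective (hN : IsOccurrenceNet N) : Function.Injective step := by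
  have key : ∀ j j', j < j' → step j ≠ step j' := fun j j' hjj' he =>
    h.not_mem_pre_step hN hjj' (phase j') (he ▸ (h.mem_pre_step_iff j' _).2 (moves_phase j'))
  intro j j' he
  by_contra hne
  rcases Nat.lt_or_gt_of_ne hne with hlt | hlt
  exacts [key j j' hlt he, key j' j hlt he.symm]

lemma post_step (hB : IsBranchingProcess (cpNet Col) N fp ft) (m : ℕ) :
    N.post (step m) = {place (m + 1) (phase m), place (m + 1) (phase m + 1)} := by
  have hbij := hB.hom.post_bij (step m)
  rw [h.ft_step, post_stepTrans] at hbij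
  obtain ⟨q₁, q₂, hq, hq₁, hq₂⟩ := hbij.exists_eq_pair
  have mem := fun a ha => h.place_succ_mem_post m a ha
  have e₁ : place (m + 1) (phase m) = q₁ :=
    hbij.injOn (mem _ (moves_phase m)) (by rw [hq]; exact Or.inl rfl) (by rw [h.fp_place, hq₁])
  have e₂ : place (m + 1) (phase m + 1) = q₂ :=
    hbij.injOn (mem _ (moves_phase_add_one m)) (by rw [hq]; exact Or.inr rfl)
      (by rw [h.fp_place, hq₂])
  rw [hq, e₁, e₂]

lemma stays_of_not_le {e₁ e₂ : Fin 3} {m₁ m₂ : ℕ} (h₂ : Arrives e₂ m₂)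
    (hle : ¬ N.le (.inl (place m₁ e₁)) (.inl (place m₂ e₂))) : Stays e₁ m₁ (max m₁ m₂) := by
  have below : ∀ s, s < m₂ → place s e₁ = place m₁ e₁ → ¬ Moves e₁ s := by
    intro s hs heq hmv
    refine hle (le_trans (heq ▸ le_of_mem_pre ((h.mem_pre_step_iff s e₁).2 hmv)) ?_)
    exact (h.le_place_iff m₂ e₂ _).2 ⟨s, by rwa [lastArrival_of_arrives h₂], rfl⟩
  by_cases hmv : Moves e₁ m₁
  · exact Or.inl (max_eq_left (not_lt.1 fun hlt => below m₁ hlt rfl hmv))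
  · have hmv' : Moves e₁ (m₁ + 1) := by unfold Moves at *; omega
    have hmax : max m₁ m₂ ≤ m₁ + 1 := max_le (Nat.le_succ _)
      (not_lt.1 fun hlt => below (m₁ + 1) hlt (h.place_succ_of_not_moves hmv) hmv')
    rcases Nat.lt_or_ge (max m₁ m₂) (m₁ + 1) with hlt | hge
    · exact Or.inl (by have := le_max_left m₁ m₂; omega)
    · exact Or.inr ⟨by omega, hmv⟩

/-- The preset places are concurrent, hence occupied at a common time, and only the step from that
time can consume them. -/
lemma exists_eq_step (hB : IsBranchingProcess (cpNet Col) N fp ft) {w : T} {r k : Fin 3}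
    (hft : ft w = .round X r k) {m₁ m₂ : ℕ} (hm₁ : Arrives k m₁) (hm₂ : Arrives (k + 1) m₂)
    (hpre : N.pre w = {place m₁ k, place m₂ (k + 1)}) : ∃ M, w = step M := by
  have hconc := hB.occ.concurrent_of_mem_pre (by rw [hpre]; exact Or.inl rfl)
    (by rw [hpre]; exact Or.inr rfl) fun he => self_ne_add_one k (h.eq_of_place_eq he)
  have e₁ := h.place_eq_of_stays (h.stays_of_not_le hm₂ hconc.1)
  have e₂ := h.place_eq_of_stays (max_comm m₂ m₁ ▸ h.stays_of_not_le hm₁ hconc.2.1)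
  rw [← e₁, ← e₂] at hpre
  have hlabel : ∀ b, place (max m₁ m₂) b ∈ N.pre w →
      CPPlace.env X b (pos b (max m₁ m₂)) ∈ (cpNet Col).pre (.round X r k) := fun b hb => by
    rw [← h.fp_place, ← hft]; exact fp_mem_pre hB hb
  have hstep := stepTrans_eq_of_mem_pre (self_ne_add_one k)
    (hlabel _ (by rw [hpre]; exact Or.inl rfl)) (hlabel _ (by rw [hpre]; exact Or.inr rfl))
  obtain rfl : k = phase (max m₁ m₂) := (CPTrans.round.inj hstep).2.2
  exact ⟨_, hB.unique _ _ (by rw [hpre, h.pre_step]) (by rw [hft, hstep, h.ft_step])⟩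

lemma exists_arrives_of_fp_eq (hB : IsBranchingProcess (cpNet Col) N fp ft) (q : P) {a : Fin 3}
    {i : Fin 6} (hq : fp q = .env X a i) : ∃ m, Arrives a m ∧ q = place m a := by
  suffices H : ∀ x : P ⊕ T, ∀ q, x = .inl q → ∀ a i, fp q = .env X a i →
      ∃ m, Arrives a m ∧ q = place m a from H _ q rfl a i hq
  intro x
  induction x using WellFounded.induction (hwf := hB.occ.wellFounded_lt) with | h x ih => ?_
  intro q hx a i hq
  subst hx
  by_cases hinit : q ∈ N.init
  · obtain ⟨Y, b, hY⟩ := hB.hom.init_bij.mapsTo hinit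
    rw [hq] at hY
    obtain ⟨rfl, rfl, rfl⟩ := CPPlace.env.inj hY
    refine ⟨0, arrives_zero a, hB.hom.init_bij.injOn hinit (h.place_zero_mem_init a) ?_⟩
    rw [hq, h.fp_place, pos_zero]
  obtain ⟨w, hw⟩ : ∃ w, q ∈ N.post w := by
    by_contra hno
    exact hinit (hB.occ.mem_init_iff.2 fun t ht => hno ⟨t, ht⟩)
  have hlabel := fp_mem_post hB hw
  rw [hq] at hlabel
  obtain ⟨r, k, hrk⟩ := cpNet_exists_round_of_mem_post hlabel
  have hbij := hB.hom.pre_bij w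
  rw [hrk, pre_round] at hbij
  obtain ⟨z₁, z₂, hpre, hz₁, hz₂⟩ := hbij.exists_eq_pair
  have below : ∀ z ∈ N.pre w, N.lt (.inl z) (.inl q) := fun z hz =>
    .tail (.single (show N.flow (.inl z) (.inr w) from hz)) hw
  obtain ⟨m₁, hm₁, rfl⟩ := ih _ (below z₁ (by rw [hpre]; exact Or.inl rfl)) z₁ rfl _ _ hz₁
  obtain ⟨m₂, hm₂, rfl⟩ := ih _ (below _ (by rw [hpre]; exact Or.inr rfl)) _ rfl _ _ hz₂
  obtain ⟨M, rfl⟩ := h.exists_eq_step hB hrk hm₁ hm₂ hpre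
  rw [h.post_step hB] at hw
  obtain ⟨b, hb, rfl⟩ : ∃ b, Moves b M ∧ q = place (M + 1) b := by
    rcases hw with rfl | rfl
    exacts [⟨_, moves_phase M, rfl⟩, ⟨_, moves_phase_add_one M, rfl⟩]
  obtain rfl : b = a := by
    have := h.fp_place (M + 1) b
    rw [hq] at this
    exact (CPPlace.env.inj this).2.1.symm
  exact ⟨M + 1, arrives_succ_iff.2 hb, rfl⟩

end IsRun

def cut (place : Bool → ℕ → Fin 3 → P) (n : Bool → ℕ) : Set P := {z | ∃ X a, z = place X (n X) a}

variable {place : Bool → ℕ → Fin 3 → P} {step : Bool → ℕ → T}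
  (hrun : ∀ X, IsRun N fp ft X (place X) (step X))
include hrun

lemma part_eq_of_place_eq {X Y : Bool} {m k : ℕ} {a b : Fin 3}
    (he : place X m a = place Y k b) : X = Y := by
  have := (hrun X).fp_place m a
  rw [he, (hrun Y).fp_place] at this
  exact (CPPlace.env.inj this).1.symm

lemma player_eq_of_place_eq {X Y : Bool} {m k : ℕ} {a b : Fin 3}
    (he : place X m a = place Y k b) : a = b := by
  have := (hrun X).fp_place m a
  rw [he, (hrun Y).fp_place] at this
  exact (CPPlace.env.inj this).2.1.symm

variable (hB : IsBranchingProcess (cpNet Col) N fp ft)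
include hB

lemma fire_cut (n : Bool → ℕ) (X : Bool) :
    N.enabled (cut place n) (step X (n X)) ∧
      N.fire (cut place n) (step X (n X)) = cut place (Function.update n X (n X + 1)) := by
  have hpre := (hrun X).pre_step (n X)
  refine ⟨?_, ?_⟩
  · rw [enabled, hpre]
    rintro z (rfl | rfl) <;> exact ⟨X, _, rfl⟩
  ext z
  simp only [fire, cut, Set.mem_union, Set.mem_sdiff, Set.mem_ofPred_eq]
  constructor
  · rintro (⟨⟨Y, b, rfl⟩, hz⟩ | hz)
    · by_cases hY : Y = X
      · subst hY
        have hb : ¬ Moves b (n Y) := fun hb => hz (((hrun Y).mem_pre_step_iff _ _).2 hb)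
        exact ⟨Y, b, by rw [Function.update_self, (hrun Y).place_succ_of_not_moves hb]⟩
      · exact ⟨Y, b, by rw [Function.update_of_ne hY]⟩
    · rw [(hrun X).post_step hB] at hz
      rcases hz with rfl | rfl <;> exact ⟨X, _, by rw [Function.update_self]⟩
  · rintro ⟨Y, b, rfl⟩
    by_cases hY : Y = X
    · subst hY
      rw [Function.update_self]
      by_cases hb : Moves b (n Y)
      · exact Or.inr ((hrun Y).place_succ_mem_post _ _ hb)
      · rw [(hrun Y).place_succ_of_not_moves hb]
        exact Or.inl ⟨⟨Y, b, rfl⟩, fun h => hb (((hrun Y).mem_pre_step_iff _ _).1 h)⟩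
    · rw [Function.update_of_ne hY]
      refine Or.inl ⟨⟨Y, b, rfl⟩, fun hmem => hY ?_⟩
      rw [hpre] at hmem
      rcases hmem with he | he <;> exact part_eq_of_place_eq hrun he

lemma init_eq_cut : N.init = cut place 0 := by
  ext z
  refine ⟨fun hz => ?_, ?_⟩
  · obtain ⟨X, a, hXa⟩ := hB.hom.init_bij.mapsTo hz
    refine ⟨X, a, hB.hom.init_bij.injOn hz ((hrun X).place_zero_mem_init a) ?_⟩
    rw [hXa, Pi.zero_apply, (hrun X).fp_place, pos_zero]
  · rintro ⟨X, a, rfl⟩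
    exact (hrun X).place_zero_mem_init a

lemma reachable_cut (n : Bool → ℕ) : N.reachable (cut place n) := by
  have advance : ∀ X k (f : Bool → ℕ), N.reachable (cut place f) →
      N.reachable (cut place (Function.update f X (f X + k))) := by
    intro X k
    induction k with
    | zero => intro f hf; simpa using hf
    | succ k ih =>
      intro f hf
      obtain ⟨hen, hfire⟩ := fire_cut hrun hB (Function.update f X (f X + k)) X
      have := reachable_fire (ih f hf) hen
      rwa [hfire, Function.update_idem, Function.update_self, add_assoc] at this
  have := advance false (n false) _ (advance true (n true) 0 ⟨[], init_eq_cut hrun hB ▸ .nil _⟩)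
  convert this using 2
  funext X
  cases X <;> simp

lemma setOf_round_le_eq_image {p : P} {u : T} {a : Fin 3} {j k : Fin 6} {mT mB : ℕ}
    (hu : p ∈ N.post u) (hft : ft u = .check a j k)
    (hpre : N.pre u = {place true mT a, place false mB a}) (haT : Arrives a mT)
    (haB : Arrives a mB) (X : Bool) :
    {v | N.le (.inr v) (.inl p) ∧ ∃ r k, ft v = .round X r k} =
      step X '' Set.Iio (cond X mT mB) := by
  have mem : ∀ Y, place Y (cond Y mT mB) a ∈ N.pre u := by
    intro Y; rw [hpre]; cases Y
    exacts [Or.inr rfl, Or.inl rfl]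
  have harr : ∀ Y, lastArrival a (cond Y mT mB) = cond Y mT mB := by
    intro Y; cases Y
    exacts [lastArrival_of_arrives haB, lastArrival_of_arrives haT]
  ext v
  constructor
  · rintro ⟨hle, r, k', hv⟩
    obtain ⟨w, hw, hvw⟩ := le_inr_inl hle
    obtain rfl := hB.occ.eq_of_mem_post hw hu
    rcases le_inr_inr hvw with rfl | ⟨z, hz, hvz⟩
    · rw [hft] at hv
      exact absurd hv (by simp)
    obtain ⟨Y, rfl⟩ : ∃ Y, z = place Y (cond Y mT mB) a := by
      rw [hpre] at hz
      rcases hz with rfl | rfl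
      exacts [⟨true, rfl⟩, ⟨false, rfl⟩]
    obtain ⟨i, hi, rfl⟩ := ((hrun Y).le_place_iff _ a v).1 hvz
    rw [(hrun Y).ft_step, stepTrans] at hv
    obtain rfl := (CPTrans.round.inj hv).1
    exact ⟨i, by rwa [harr] at hi, rfl⟩
  · rintro ⟨i, hi, rfl⟩
    refine ⟨le_trans ?_ (le_trans (le_of_mem_pre (mem X)) (le_of_mem_post hu)),
      _, _, (hrun X).ft_step i⟩
    exact ((hrun X).le_place_iff _ a _).2 ⟨i, by rwa [harr], rfl⟩

lemma roundsIn_post_check {p : P} {u : T} {a : Fin 3} {j k : Fin 6} {mT mB : ℕ}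
    (hu : p ∈ N.post u) (hft : ft u = .check a j k)
    (hpre : N.pre u = {place true mT a, place false mB a}) (haT : Arrives a mT)
    (haB : Arrives a mB) (X : Bool) : roundsIn N ft X p = roundOf (cond X mT mB) := by
  have hcard : Nat.card {v // N.le (.inr v) (.inl p) ∧ ∃ r k, ft v = .round X r k} =
      cond X mT mB := by
    rw [← Set.ncard_Iio_nat (cond X mT mB), ← ((hrun X).step_injective hB.occ).injOn.ncard_image,
      ← setOf_round_le_eq_image hrun hB hu hft hpre haT haB X, ← Nat.card_coe_set_eq]
    rfl
  rw [roundsIn, hcard, roundOf]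

end Runs

/-! ### Colour choices -/

section Colours

open PreNet

variable {Col : Type} {P T : Type} {N : PreNet P T} {fp : P → CPPlace Col} {ft : T → CPTrans Col}

variable (N fp ft) in
/-- The strategy allows colour `c` at the system place produced by the check of player `a` on the
places it reached at times `mT` (top) and `mB` (bottom). -/
def AllowsColour (place : Bool → ℕ → Fin 3 → P) (a : Fin 3) (mT mB : ℕ) (c : Col) : Prop :=
  ∃ u s σ, N.pre u = {place true mT a, place false mB a} ∧
    ft u = .check a (pos a mT) (pos a mB) ∧ s ∈ N.post u ∧ fp s = .sys a ∧ s ∈ N.pre σ ∧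
    ft σ = .colour a c

variable {place : Bool → ℕ → Fin 3 → P} {step : Bool → ℕ → T}

lemma exists_allowsColour_of_sys (hrun : ∀ X, IsRun N fp ft X (place X) (step X))
    (hB : IsBranchingProcess (cpNet Col) N fp ft) {p : P} {a : Fin 3} (hp : fp p = .sys a)
    {t : T} {c : Col} (hpt : p ∈ N.pre t) (hc : ft t = .colour a c) :
    ∃ mT mB, Arrives a mT ∧ Arrives a mB ∧ AllowsColour N fp ft place a mT mB c ∧
      roundsIn N ft true p = roundOf mT ∧ roundsIn N ft false p = roundOf mB := by
  obtain ⟨u, j, k, hu, hft⟩ := exists_check_of_sys hB hp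
  have hbij := hB.hom.pre_bij u
  rw [hft] at hbij
  obtain ⟨zT, zB, hpre, hzT, hzB⟩ := hbij.exists_eq_pair
  obtain ⟨mT, hmT, rfl⟩ := (hrun true).exists_arrives_of_fp_eq hB zT hzT
  obtain ⟨mB, hmB, rfl⟩ := (hrun false).exists_arrives_of_fp_eq hB zB hzB
  have hj : j = pos a mT := (CPPlace.env.inj (hzT.symm.trans ((hrun true).fp_place mT a))).2.2
  have hk : k = pos a mB := (CPPlace.env.inj (hzB.symm.trans ((hrun false).fp_place mB a))).2.2
  exact ⟨mT, mB, hmT, hmB, ⟨u, p, t, hpre, hj ▸ hk ▸ hft, hu, hp, hpt, hc⟩,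
    roundsIn_post_check hrun hB hu hft hpre hmT hmB true,
    roundsIn_post_check hrun hB hu hft hpre hmT hmB false⟩

variable {Ci : Set Col} {DP HP VP : Set (Col × Col)}
  (hwin : IsWinningStrategy (cpGame Col Ci DP HP VP) N fp ft)
include hwin

/-- At a reachable marking without environment places, deadlock avoidance lets the system choose a
colour on any system place, after firing colour choices on other system places only. -/
lemma exists_colour_choice {M : Set P} (hM : N.reachable M) (hfin : M.Finite)
    (henv : ∀ z ∈ M, ∀ X a i, fp z ≠ .env X a i) {s : P} {d : Fin 3} (hs : s ∈ M)
    (hfs : fp s = .sys d) (c₀ : Col) :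
    ∃ M', N.reachable M' ∧ s ∈ M' ∧ (∀ z ∈ M, (∀ g, fp z ≠ .sys g) → z ∈ M') ∧
      ∃ σ c, s ∈ N.pre σ ∧ ft σ = .colour d c := by
  induction hn : {z ∈ M | ∃ g, fp z = .sys g}.ncard using Nat.strong_induction_on
    generalizing M with | _ n ih => ?_
  obtain ⟨v, hv⟩ := hwin.deadlock_avoiding M hM ⟨.colour d c₀, by rintro _ rfl; exact ⟨s, hs, hfs⟩⟩
  obtain ⟨z, g, c, hz, hzM, hfz, hft⟩ := exists_colour_of_enabled hwin.isBP henv hv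
  by_cases hzs : z = s
  · subst hzs
    obtain rfl : g = d := CPPlace.sys.inj (hfz.symm.trans hfs)
    exact ⟨M, hM, hs, fun _ hy _ => hy, v, c, hz, hft⟩
  obtain ⟨o, ho, hreach⟩ := reachable_fire_colour hwin.isBP hM hzM hz hft
  have keep : ∀ y ∈ M, y ≠ z → y ∈ M \ {z} ∪ {o} := fun y hy hyz => Or.inl ⟨hy, hyz⟩
  have hlt : {y ∈ M \ {z} ∪ {o} | ∃ g, fp y = .sys g}.ncard < n := by
    rw [← hn]
    refine Set.ncard_lt_ncard ⟨fun y ⟨hy, hys⟩ => ?_, fun hsub => ?_⟩ (hfin.subset fun y hy => hy.1)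
    · rcases hy with ⟨hy, -⟩ | rfl
      · exact ⟨hy, hys⟩
      · obtain ⟨g, hg⟩ := hys
        exact absurd (ho.symm.trans hg) (by simp)
    · rcases (hsub ⟨hzM, g, hfz⟩).1 with ⟨-, hzz⟩ | hzo
      · exact hzz rfl
      · rw [Set.mem_singleton_iff.1 hzo, ho] at hfz
        exact absurd hfz (by simp)
  obtain ⟨M', hM', hsM', hkeep, hσ⟩ := ih _ hlt hreach (hfin.sdiff.union (Set.finite_singleton o))
    (fun y hy => by
      rcases hy with ⟨hy, -⟩ | rfl
      · exact henv y hy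
      · intro X a i; rw [ho]; simp)
    (keep s hs (Ne.symm hzs)) rfl
  refine ⟨M', hM', hsM', fun y hy hys => hkeep y (keep y hy fun hyz => ?_) hys, hσ⟩
  exact hys g (hyz ▸ hfz)

variable (hrun : ∀ X, IsRun N fp ft X (place X) (step X))
include hrun

lemma AllowsColour.unique {a : Fin 3} {mT mB : ℕ} {c c' : Col}
    (h : AllowsColour N fp ft place a mT mB c) (h' : AllowsColour N fp ft place a mT mB c') :
    c = c' := by
  obtain ⟨u, s, σ, hpre, hft, hs, hfs, hσ, hfσ⟩ := h
  obtain ⟨u', s', σ', hpre', hft', hs', hfs', hσ', hfσ'⟩ := h'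
  obtain rfl : u = u' := hwin.isBP.unique u u' (hpre.trans hpre'.symm) (hft.trans hft'.symm)
  obtain rfl : s = s' := (hwin.isBP.hom.post_bij u).injOn hs hs' (hfs.trans hfs'.symm)
  set M := cut place fun X => cond X mT mB
  have hen : N.enabled M u := by
    rw [enabled, hpre]
    rintro z (rfl | rfl)
    exacts [⟨true, a, rfl⟩, ⟨false, a, rfl⟩]
  have hsM : s ∈ N.fire M u := Or.inr hs
  have hdet := hwin.determinism s ⟨a, hfs⟩ _
    (reachable_fire (reachable_cut hrun hwin.isBP _) hen) hsM
  have henabled : ∀ {τ a c}, ft τ = .colour a c → s ∈ N.pre τ → N.enabled (N.fire M u) τ :=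
    fun hft hs => by rw [enabled, pre_colour hwin.isBP hft hs, Set.singleton_subset_iff]; exact hsM
  obtain rfl : σ = σ' := hdet ⟨hσ, henabled hfσ hσ⟩ ⟨hσ', henabled hfσ' hσ'⟩
  rw [hfσ] at hfσ'
  exact (CPTrans.colour.inj hfσ').2

lemma reachable_iUnion_post_checks (n : Bool → ℕ) {u : Fin 3 → T}
    (hpre : ∀ x, N.pre (u x) = {place true (n true) x, place false (n false) x})
    (hft : ∀ x, ∃ j k, ft (u x) = .check x j k) : N.reachable (⋃ x, N.post (u x)) := by
  have not_env : ∀ x, ∀ z ∈ N.post (u x), ∀ X a i, fp z ≠ .env X a i := by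
    intro x z hz X a i
    obtain ⟨j, k, hjk⟩ := hft x
    rcases fp_post_check hwin.isBP hjk hz with he | he <;> simp [he]
  have post_pre : ∀ x y, Disjoint (N.post (u x)) (N.pre (u y)) := fun x y =>
    Set.disjoint_left.2 fun z hz hz' => by
      rw [hpre] at hz'
      rcases hz' with rfl | rfl <;> exact not_env x _ hz _ _ _ ((hrun _).fp_place _ _)
  have pre_pre : ∀ x y, x ≠ y → Disjoint (N.pre (u x)) (N.pre (u y)) := fun x y hxy =>
    Set.disjoint_left.2 fun z hz hz' => by
      rw [hpre] at hz hz'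
      rcases hz with rfl | rfl <;> rcases hz' with he | he <;>
        exact hxy (player_eq_of_place_eq hrun he)
  have hF := Fires.of_disjoint (N := N) (R := ∅) (l := [u 0, u 1, u 2])
    (by simp only [List.pairwise_cons, List.mem_cons, List.not_mem_nil, or_false,
          forall_eq_or_imp, forall_eq, List.Pairwise.nil, and_true]
        exact ⟨⟨pre_pre 0 1 (by decide), pre_pre 0 2 (by decide)⟩, pre_pre 1 2 (by decide),
          fun _ h => h.elim⟩)
    (fun _ _ => Set.disjoint_empty _)
    (fun t ht t' ht' => by
      simp only [List.mem_cons, List.not_mem_nil, or_false] at ht ht'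
      rcases ht with rfl | rfl | rfl <;> rcases ht' with rfl | rfl | rfl <;> exact post_pre _ _)
  obtain ⟨l, hl⟩ := reachable_cut hrun hwin.isBP n
  refine ⟨l ++ [u 0, u 1, u 2], hl.append ?_⟩
  convert hF using 1
  · ext z
    simp only [cut, Set.mem_ofPred_eq, Set.empty_union, List.mem_cons, List.not_mem_nil,
      Set.mem_iUnion, exists_prop, Bool.exists_bool, Fin.exists_fin_succ, Fin.exists_fin_zero]
    aesop
  · ext z
    simp only [Set.empty_union, List.mem_cons, List.not_mem_nil, Set.mem_iUnion, exists_prop,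
      Fin.exists_fin_succ, Fin.exists_fin_zero]
    aesop

/-- The checks of all three players and the colour choice of `a` can be fired from a common cut;
deadlock avoidance then forces a colour choice of `d`, which `B_Same` makes equal to that of `a`. -/
lemma AllowsColour.of_meets {a d : Fin 3} {jT jB mT mB : ℕ} {c : Col}
    (h : AllowsColour N fp ft place a jT jB c) (hne : a ≠ d) (hT : Meets a jT d mT)
    (hB : Meets a jB d mB) : AllowsColour N fp ft place d mT mB c := by
  obtain ⟨u₁, s₁, σ₁, hpre₁, hft₁, hs₁, hfs₁, hσ₁, hfσ₁⟩ := h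
  have ⟨_, _, _, hsaT, hsdT⟩ := hT
  have ⟨_, _, _, hsaB, hsdB⟩ := hB
  choose u hft hpre using fun x =>
    exists_check hwin ((hrun true).fp_place (max jT mT) x) ((hrun false).fp_place (max jB mB) x)
  have hreach₃ := reachable_iUnion_post_checks hwin hrun (fun X => cond X (max jT mT) (max jB mB))
    hpre fun x => ⟨_, _, hft x⟩
  obtain rfl : u a = u₁ := hwin.isBP.unique _ _
    (by rw [hpre, hpre₁, (hrun true).place_eq_of_stays hsaT, (hrun false).place_eq_of_stays hsaB])
    (by rw [hft, hft₁, pos_eq_of_stays hsaT, pos_eq_of_stays hsaB])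
  set M₃ := ⋃ x, N.post (u x)
  have mem₃ : ∀ x, ∀ z ∈ N.post (u x), z ∈ M₃ := fun x z hz => Set.mem_iUnion.2 ⟨x, hz⟩
  obtain ⟨o₁, ho₁, hreach₄⟩ := reachable_fire_colour hwin.isBP hreach₃ (mem₃ _ _ hs₁) hσ₁ hfσ₁
  set M₄ := M₃ \ {s₁} ∪ {o₁}
  have mem₄ : ∀ x, ∀ z ∈ N.post (u x), fp z ≠ .sys a → z ∈ M₄ := fun x z hz hzs =>
    Or.inl ⟨mem₃ x z hz, fun he => hzs (Set.mem_singleton_iff.1 he ▸ hfs₁)⟩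
  have henv₄ : ∀ z ∈ M₄, ∀ X b i, fp z ≠ .env X b i := by
    rintro z (⟨hz, -⟩ | hz) X b i
    · obtain ⟨x, hx⟩ := Set.mem_iUnion.1 hz
      rcases fp_post_check hwin.isBP (hft x) hx with he | he <;> simp [he]
    · simp [Set.mem_singleton_iff.1 hz, ho₁]
  have hfin₄ : M₄.Finite :=
    (Set.finite_iUnion fun x => hwin.isBP.occ.toIsPetriNet.post_finite (u x)).sdiff.union
      (Set.finite_singleton _)
  obtain ⟨k₁, _, hpost₁, hk₁, -⟩ := exists_post_check hwin.isBP (hft a)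
  obtain ⟨k₂, s₂, hpost₂, hk₂, hs₂⟩ := exists_post_check hwin.isBP (hft d)
  obtain ⟨M', hM', hs₂M', hkeep, σ₂, c₂, hσ₂, hfσ₂⟩ := exists_colour_choice hwin hreach₄ hfin₄
    henv₄ (mem₄ d s₂ (hpost₂ ▸ Or.inr rfl) (by simpa [hs₂] using hne.symm)) hs₂ c
  obtain ⟨o₂, ho₂, hreach⟩ := reachable_fire_colour hwin.isBP hM' hs₂M' hσ₂ hfσ₂
  have survives : ∀ z ∈ M₄, (∀ g, fp z ≠ .sys g) → z ∈ M' \ {s₂} ∪ {o₂} := fun z hz hzs =>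
    Or.inl ⟨hkeep z hz hzs, fun he => hzs d (Set.mem_singleton_iff.1 he ▸ hs₂)⟩
  have hc : c = c₂ := colour_eq_of_sameRound hwin hreach
    (survives k₁ (mem₄ a k₁ (hpost₁ ▸ Or.inl rfl) (by simp [hk₁])) (by simp [hk₁])) hk₁
    (survives k₂ (mem₄ d k₂ (hpost₂ ▸ Or.inl rfl) (by simp [hk₂])) (by simp [hk₂])) hk₂
    (survives o₁ (Or.inr rfl) (by simp [ho₁])) ho₁ (Or.inr rfl) ho₂
    hT.sameRound_pos hB.sameRound_pos
  refine ⟨u d, s₂, σ₂, ?_, ?_, hpost₂ ▸ Or.inr rfl, hs₂, hσ₂, hc ▸ hfσ₂⟩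
  · rw [hpre, (hrun true).place_eq_of_stays hsdT, (hrun false).place_eq_of_stays hsdB]
  · rw [hft, pos_eq_of_stays hsdT, pos_eq_of_stays hsdB]

/-- Along chains of meeting players `1 → 0 → 2 → 0 → 1`, entered at the player of the check. -/
lemma AllowsColour.to_one {a : Fin 3} {mT mB : ℕ} {c : Col}
    (h : AllowsColour N fp ft place a mT mB c) (hT : Arrives a mT) (hB : Arrives a mB) :
    AllowsColour N fp ft place 1 (3 * roundOf mT - 1) (3 * roundOf mB - 1) c := by
  have from_two : ∀ {mT mB}, AllowsColour N fp ft place 2 mT mB c → Arrives 2 mT → Arrives 2 mB →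
      AllowsColour N fp ft place 1 (3 * roundOf mT - 1) (3 * roundOf mB - 1) c := by
    intro mT mB h hT hB
    obtain ⟨m'T, hT0, hmT⟩ := exists_meets_two_zero hT
    obtain ⟨m'B, hB0, hmB⟩ := exists_meets_two_zero hB
    rw [hmT.2.2.1, hmB.2.2.1]
    exact (h.of_meets hwin hrun (by decide) hmT hmB).of_meets hwin hrun (by decide)
      (meets_zero_one hmT.2.1 hT0) (meets_zero_one hmB.2.1 hB0)
  have from_zero : ∀ {mT mB}, AllowsColour N fp ft place 0 mT mB c → Arrives 0 mT → Arrives 0 mB →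
      AllowsColour N fp ft place 1 (3 * roundOf mT - 1) (3 * roundOf mB - 1) c := by
    intro mT mB h hT hB
    obtain ⟨m'T, hmT⟩ := exists_meets_zero_two hT
    obtain ⟨m'B, hmB⟩ := exists_meets_zero_two hB
    rw [hmT.2.2.1, hmB.2.2.1]
    exact from_two (h.of_meets hwin hrun (by decide) hmT hmB) hmT.2.1 hmB.2.1
  fin_cases a
  · exact from_zero h hT hB
  · obtain ⟨m'T, hmT⟩ := exists_meets_one_zero hT
    obtain ⟨m'B, hmB⟩ := exists_meets_one_zero hB
    rw [hmT.2.2.1, hmB.2.2.1]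
    exact from_zero (h.of_meets hwin hrun (by decide) hmT hmB) hmT.2.1 hmB.2.1
  · exact from_two h hT hB

end Colours

theorem derived_colouring_well_defined_general {Col : Type}
    (Ci : Set Col) (DP HP VP : Set (Col × Col))
    {P T : Type} (N : PreNet P T) (fp : P → CPPlace Col) (ft : T → CPTrans Col)
    (hwin : IsWinningStrategy (cpGame Col Ci DP HP VP) N fp ft)
    (p p' : P) (a b : Fin 3)
    (hp : fp p = CPPlace.sys a) (hp' : fp p' = CPPlace.sys b)
    (htop : roundsIn N ft true p = roundsIn N ft true p')
    (hbot : roundsIn N ft false p = roundsIn N ft false p')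
    (t t' : T) (c c' : Col)
    (hpt : p ∈ N.pre t) (hpt' : p' ∈ N.pre t')
    (hc : ft t = CPTrans.colour a c) (hc' : ft t' = CPTrans.colour b c') :
    c = c' := by
  choose place step hrun using exists_isRun hwin
  obtain ⟨mT, mB, hmT, hmB, h, hrT, hrB⟩ := exists_allowsColour_of_sys hrun hwin.isBP hp hpt hc
  obtain ⟨mT', mB', hmT', hmB', h', hrT', hrB'⟩ :=
    exists_allowsColour_of_sys hrun hwin.isBP hp' hpt' hc'
  have h₁ := h.to_one hwin hrun hmT hmB
  rw [← hrT, ← hrB, htop, hbot, hrT', hrB'] at h₁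
  exact h₁.unique hwin hrun (h'.to_one hwin hrun hmT' hmB')

/-- (Well-definedness of the derived colouring.) Let `σ` be a
winning strategy of `G_CP`. If `p` and `p'` are system places of `σ` above `s_a`
and `s_b` respectively, with equal top round counts and equal bottom round
counts, and the strategy allows the colour transitions `t_{a,c}` at `p` and
`t_{b,c'}` at `p'`, then `c = c'`. Hence the colour chosen at given round counts
`(x, y)` is a well-defined partial function. -/
theorem derived_colouring_well_defined {Col : Type} [Finite Col]
    (Ci : Set Col) (DP HP VP : Set (Col × Col))
    {P T : Type} (N : PreNet P T) (fp : P → CPPlace Col) (ft : T → CPTrans Col)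
    (hwin : IsWinningStrategy (cpGame Col Ci DP HP VP) N fp ft)
    (p p' : P) (a b : Fin 3)
    (hp : fp p = CPPlace.sys a) (hp' : fp p' = CPPlace.sys b)
    (htop : roundsIn N ft true p = roundsIn N ft true p')
    (hbot : roundsIn N ft false p = roundsIn N ft false p')
    (t t' : T) (c c' : Col)
    (hpt : p ∈ N.pre t) (hpt' : p' ∈ N.pre t')
    (hc : ft t = CPTrans.colour a c) (hc' : ft t' = CPTrans.colour b c') :
    c = c' :=
  derived_colouring_well_defined_general Ci DP HP VP N fp ft hwin p p' a b hp hp' htop hbot t t' c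
    c' hpt hpt' hc hc'

end PG
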